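/- arXiv:math/0603354 — 8 statements merged into one kernel-verified Lean document; each statement's English description precedes it below -/
import Mathlib

section
/- For every infinite word x over an alphabet A ⊆ ℕ and every finite word w over an alphabet B with |w| > max A, if w is such that for every letter i occurring in x, w is a prefix of σ_w(i)·w (where σ_w is the substitution sending a letter i to the prefix of w of length |w| − i), then the infinite word ∫_w x (the image of x under σ_w) is quasiperiodic with w as a quasiperiod. -/
open Filter MeasureTheory Topology

/-- The finite word `u` occurs in the infinite word `x` at position `i`. -/
def OccursAt {A : Type*} (x : ℕ → A) (u : List A) (i : ℕ) : Prop :=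
  ∀ k : Fin u.length, x (i + k) = u.get k

/-- The finite word `u` is a factor of the infinite word `x`. -/
def IsFactor {A : Type*} (x : ℕ → A) (u : List A) : Prop :=
  ∃ i, OccursAt x u i

/-- `q` is a quasiperiod of the infinite word `x`: there is a strictly increasing
sequence of occurrence positions of `q`, starting at `0`, with gaps at most `|q|`. -/
def IsQuasiperiod {A : Type*} (x : ℕ → A) (q : List A) : Prop :=
  ∃ i : ℕ → ℕ, StrictMono i ∧ i 0 = 0 ∧ (∀ n, OccursAt x q (i n)) ∧
    ∀ n, i (n + 1) - i n ≤ q.length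

/-- An infinite word is multi-scale quasiperiodic if it has infinitely many quasiperiods. -/
def MultiScaleQuasiperiodic {A : Type*} (x : ℕ → A) : Prop :=
  {q : List A | IsQuasiperiod x q}.Infinite

/-- The word complexity `p_n(x)`: the number of distinct factors of `x` of length `n`. -/
noncomputable def complexity {A : Type*} (x : ℕ → A) (n : ℕ) : ℕ :=
  Set.ncard {u : List A | u.length = n ∧ IsFactor x u}

/-- `#(u, x_{0→n-1})`: the number of occurrences of `u` in the length-`n` prefix of `x`. -/
noncomputable def occCount {A : Type*} (x : ℕ → A) (u : List A) (n : ℕ) : ℕ :=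
  Set.ncard {i : ℕ | i + u.length ≤ n ∧ OccursAt x u i}

/-- `#(u, v)`: the number of occurrences of the finite word `u` in the finite word `v`. -/
noncomputable def countIn {A : Type*} (u v : List A) : ℕ :=
  Set.ncard {i : ℕ | i + u.length ≤ v.length ∧ u <+: v.drop i}

/-- Starting position of the `n`-th block in the integration `∫_w x`:
the `k`-th block is `σ_w(x_k)`, of length `|w| - x_k`. -/
def blockStart {B : Type*} (w : List B) (x : ℕ → ℕ) : ℕ → ℕ
  | 0 => 0
  | n + 1 => blockStart w x n + (w.length - x n)

/-- The integration `∫_w x`: the infinite word `σ_w(x_0) σ_w(x_1) σ_w(x_2) ⋯`, where the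
substitution `σ_w` sends a letter `i` to the prefix of `w` of length `|w| - i`. -/
noncomputable def integrate {B : Type*} (w : List B) (hw : w ≠ []) (x : ℕ → ℕ) (m : ℕ) : B :=
  w.get ⟨(m - blockStart w x (Nat.findGreatest (fun j => blockStart w x j ≤ m) m)) % w.length,
    Nat.mod_lt _ (List.length_pos_iff.mpr hw)⟩

private theorem getElemCongrAux {α : Type*} {l : List α} {a b : ℕ} (h : a = b)
    {ha : a < l.length} : l[a]'ha = l[b]'(h ▸ ha) := by subst h; rfl

/-- if `x` is an infinite word over an alphabet `A ⊆ ℕ`, `w` a finite word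
with `|w| > max A`, and for every letter `i` occurring in `x` the word `w` is a prefix of
`σ_w(i) ⬝ w`, then `∫_w x` is quasiperiodic with quasiperiod `w`. -/
theorem integration_is_quasiperiodic {B : Type*} (A : Finset ℕ) (hA : A.Nonempty)
    (x : ℕ → ℕ) (hx : ∀ n, x n ∈ A)
    (w : List B) (hlen : A.max' hA < w.length)
    (hpref : ∀ n, w <+: w.take (w.length - x n) ++ w) :
    IsQuasiperiod
      (integrate w (List.length_pos_iff.mp (lt_of_le_of_lt (Nat.zero_le _) hlen)) x) w := by
  set L := w.length with hL
  have hxlt : ∀ n, x n < L := fun n => lt_of_le_of_lt (A.le_max' _ (hx n)) hlen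
  have hLpos : 0 < L := lt_of_le_of_lt (Nat.zero_le _) hlen
  have hsucc : ∀ n, blockStart w x (n + 1) = blockStart w x n + (L - x n) := fun n => rfl
  have smono : StrictMono (blockStart w x) := by
    apply strictMono_nat_of_lt_succ
    intro n; rw [hsucc]; have := hxlt n; omega
  have bsmono : Monotone (blockStart w x) := smono.monotone
  have bs_ge : ∀ j, j ≤ blockStart w x j := by
    intro j
    induction j with
    | zero => simp [blockStart]
    | succ j ih => rw [hsucc]; have := hxlt j; omega
  -- key step: folding back one block
  have key : ∀ j t (ht1 : L - x j ≤ t) (ht2 : t < L),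
      w[t]'ht2 = w[t - (L - x j)]'(by omega) := by
    intro j t ht1 ht2
    have h := (hpref j).getElem ht2
    rw [h, List.getElem_append_right (by rw [List.length_take]; omega)]
    have heq : t - (w.take (L - x j)).length = t - (L - x j) := by
      rw [List.length_take]; omega
    exact getElemCongrAux heq
  refine ⟨blockStart w x, smono, rfl, ?_, ?_⟩
  · intro n k
    set m := blockStart w x n + (k : ℕ) with hm
    have hkL : (k : ℕ) < L := k.isLt
    have hbound : ∀ j, n ≤ j → blockStart w x j ≤ m → m - blockStart w x j < L := by
      intro j hj hjm
      have := bsmono hj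
      omega
    have main : ∀ j (hnj : n ≤ j) (hbm : blockStart w x j ≤ m),
        w[m - blockStart w x j]'(hbound j hnj hbm) = w[(k : ℕ)]'hkL := by
      intro j hnj
      induction j, hnj using Nat.le_induction with
      | base =>
        intro hbm
        exact getElemCongrAux (by omega)
      | succ j hnj ih =>
        intro hbm
        have hprev : blockStart w x j ≤ m := le_trans (bsmono (Nat.le_succ j)) hbm
        have hbs : blockStart w x (j + 1) = blockStart w x j + (L - x j) := hsucc j
        rw [← ih hprev]
        have hk := key j (m - blockStart w x j) (by omega) (hbound _ hnj hprev)
        rw [hk]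
        exact getElemCongrAux (by omega)
    -- analyze the findGreatest
    set j₀ := Nat.findGreatest (fun j => blockStart w x j ≤ m) m with hj₀
    have hP0 : blockStart w x 0 ≤ m := by simp [blockStart]
    have hle : blockStart w x j₀ ≤ m :=
      Nat.findGreatest_spec (P := fun j => blockStart w x j ≤ m) (Nat.zero_le m) hP0
    have hnle : n ≤ j₀ :=
      Nat.le_findGreatest (le_trans (bs_ge n) (Nat.le_add_right _ _)) (Nat.le_add_right _ _)
    have hj₀le : j₀ ≤ m := Nat.findGreatest_le m
    have hgt : m < blockStart w x (j₀ + 1) := by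
      by_cases h : j₀ + 1 ≤ m
      · by_contra hc
        have hg := Nat.findGreatest_is_greatest
          (P := fun j => blockStart w x j ≤ m) (n := m) (k := j₀ + 1) (by omega) h
        exact hg (by omega)
      · have h1 : j₀ = m := by omega
        have h2 := bs_ge (j₀ + 1)
        omega
    have hoff : m - blockStart w x j₀ < L := by
      rw [hsucc] at hgt
      have := hxlt j₀
      omega
    show w.get ⟨(m - blockStart w x j₀) % L, _⟩ = w.get k
    have hmod : (m - blockStart w x j₀) % L = m - blockStart w x j₀ := Nat.mod_eq_of_lt hoff
    simp only [List.get_eq_getElem, hmod]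
    exact main j₀ hnle hle
  · intro n
    rw [hsucc]
    omega
end

section
/- For every natural number k and every infinite word x over the alphabet {0, 1, …, k}, the infinite word y = ∫_{a^k b a^k} x (integration along the word a^k b a^k of length 2k+1 over a two-letter alphabet {a,b} with a ≠ b) is quasiperiodic and is complexity equivalent to x, i.e. there exists a positive integer K such that for all n ≥ 1, p_n(x) ≤ K·p_{Kn}(y) and p_n(y) ≤ K·p_{Kn}(x). In particular every class of complexity equivalence contains a quasiperiodic word. -/
open Filter MeasureTheory Topology

/-- The word `a^k b a^k`. -/
def akbak {B : Type*} (a b : B) (k : ℕ) : List B :=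
  List.replicate k a ++ b :: List.replicate k a

theorem akbak_ne_nil {B : Type*} (a b : B) (k : ℕ) : akbak a b k ≠ [] := by
  simp [akbak]

namespace QPaux

variable {B : Type*}

lemma akbak_length (a b : B) (k : ℕ) : (akbak a b k).length = 2 * k + 1 := by
  simp [akbak]; omega

lemma akbak_getElem (a b : B) (k t : ℕ) (h : t < (akbak a b k).length) :
    (akbak a b k)[t] = if t = k then b else a := by
  rw [akbak_length] at h
  simp only [akbak]
  rcases lt_trichotomy t k with hlt | rfl | hgt
  · rw [List.getElem_append_left (by simpa using hlt), List.getElem_replicate,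
      if_neg (Nat.ne_of_lt hlt)]
  · rw [List.getElem_append_right (by simp), if_pos rfl]
    simp
  · rw [List.getElem_append_right (by simp; omega), if_neg (Nat.ne_of_gt hgt)]
    simp only [List.length_replicate]
    obtain ⟨s, hs⟩ : ∃ s, t - k = s + 1 := ⟨t - k - 1, by omega⟩
    simp only [hs]
    simp [List.getElem_cons_succ, List.getElem_replicate]

lemma blockStart_succ (w : List B) (x : ℕ → ℕ) (n : ℕ) :
    blockStart w x (n + 1) = blockStart w x n + (w.length - x n) := rfl

lemma blockStart_strictMono (w : List B) (x : ℕ → ℕ) (h : ∀ n, x n < w.length) :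
    StrictMono (blockStart w x) :=
  strictMono_nat_of_lt_succ fun n => by have := h n; rw [blockStart_succ]; omega

lemma blockStart_le_mul (w : List B) (x : ℕ → ℕ) (n : ℕ) :
    blockStart w x n ≤ n * w.length := by
  induction n with
  | zero => simp [blockStart]
  | succ n ih =>
    rw [blockStart_succ, Nat.succ_mul]
    have : w.length - x n ≤ w.length := Nat.sub_le _ _
    omega

lemma mul_le_blockStart (w : List B) (x : ℕ → ℕ) (c : ℕ) (h : ∀ n, c ≤ w.length - x n) (n : ℕ) :
    n * c ≤ blockStart w x n := by
  induction n with
  | zero => simp [blockStart]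
  | succ n ih => rw [blockStart_succ, Nat.succ_mul]; have := h n; omega

lemma blockStart_shift (w : List B) (x : ℕ → ℕ) (i : ℕ) :
    ∀ m, blockStart w x (i + m) = blockStart w x i + blockStart w (fun t => x (i + t)) m
  | 0 => by simp [blockStart]
  | m + 1 => by
    have : i + (m + 1) = (i + m) + 1 := by omega
    rw [this, blockStart_succ, blockStart_succ, blockStart_shift w x i m]
    omega

noncomputable def bidx (w : List B) (x : ℕ → ℕ) (m : ℕ) : ℕ :=
  Nat.findGreatest (fun j => blockStart w x j ≤ m) m

lemma self_le_blockStart (w : List B) (x : ℕ → ℕ) (h : ∀ n, x n < w.length) (n : ℕ) :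
    n ≤ blockStart w x n := by
  have := mul_le_blockStart w x 1 (fun n => by have := h n; omega) n
  omega

lemma bidx_spec (w : List B) (x : ℕ → ℕ) (h : ∀ n, x n < w.length) (m : ℕ) :
    blockStart w x (bidx w x m) ≤ m ∧ m < blockStart w x (bidx w x m + 1) := by
  have h0 : blockStart w x (bidx w x m) ≤ m :=
    Nat.findGreatest_spec (P := fun j => blockStart w x j ≤ m) (Nat.zero_le m)
      (by simp [blockStart])
  refine ⟨h0, ?_⟩
  by_contra hc
  push_neg at hc
  have hle : bidx w x m + 1 ≤ m := le_trans (self_le_blockStart w x h _) hc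
  exact Nat.findGreatest_is_greatest (Nat.lt_succ_self _) hle hc

lemma bidx_eq (w : List B) (x : ℕ → ℕ) (h : ∀ n, x n < w.length) (j t : ℕ)
    (ht : t < w.length - x j) : bidx w x (blockStart w x j + t) = j := by
  obtain ⟨h1, h2⟩ := bidx_spec w x h (blockStart w x j + t)
  set J := bidx w x (blockStart w x j + t) with hJ
  by_contra hne
  rcases lt_or_gt_of_ne hne with hlt | hgt
  · have := (blockStart_strictMono w x h).monotone (Nat.succ_le_of_lt hlt)
    simp only [Nat.succ_eq_add_one] at this
    omega
  · have := (blockStart_strictMono w x h).monotone (Nat.succ_le_of_lt hgt)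
    simp only [Nat.succ_eq_add_one, blockStart_succ] at this
    omega

lemma integrate_eval (w : List B) (hw : w ≠ []) (x : ℕ → ℕ) (h : ∀ n, x n < w.length)
    (j t : ℕ) (ht : t < w.length - x j) :
    integrate w hw x (blockStart w x j + t) = w[t]'(by omega) := by
  unfold integrate
  rw [List.get_eq_getElem]
  have hb := bidx_eq w x h j t ht
  rw [bidx] at hb
  simp only [hb]
  have hidx : (blockStart w x j + t - blockStart w x j) % w.length = t := by
    rw [Nat.add_sub_cancel_left]
    exact Nat.mod_eq_of_lt (by omega)
  simp only [hidx]

section Specialized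

variable (a b : B) (k : ℕ) (x : ℕ → ℕ)

lemma xlt (hx : ∀ n, x n ≤ k) : ∀ n, x n < (akbak a b k).length := fun n => by
  rw [akbak_length]; have := hx n; omega

lemma y_eval (hx : ∀ n, x n ≤ k) (j t : ℕ) (ht : t < 2 * k + 1 - x j) :
    integrate (akbak a b k) (akbak_ne_nil a b k) x (blockStart (akbak a b k) x j + t) =
      if t = k then b else a := by
  rw [integrate_eval (akbak a b k) (akbak_ne_nil a b k) x (xlt a b k x hx) j t
    (by rw [akbak_length]; omega), akbak_getElem]

lemma y_mem (hx : ∀ n, x n ≤ k) (m : ℕ) :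
    integrate (akbak a b k) (akbak_ne_nil a b k) x m ∈ ({a, b} : Set B) := by
  obtain ⟨h1, h2⟩ := bidx_spec (akbak a b k) x (xlt a b k x hx) m
  rw [blockStart_succ, akbak_length] at h2
  set j := bidx (akbak a b k) x m with hj
  have hm : m = blockStart (akbak a b k) x j + (m - blockStart (akbak a b k) x j) := by omega
  rw [hm, y_eval a b k x hx j _ (by omega)]
  split <;> simp

lemma y_eq_b_iff (hab : a ≠ b) (hx : ∀ n, x n ≤ k) (m : ℕ) :
    integrate (akbak a b k) (akbak_ne_nil a b k) x m = b ↔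
      ∃ j, m = blockStart (akbak a b k) x j + k := by
  constructor
  · intro hb
    obtain ⟨h1, h2⟩ := bidx_spec (akbak a b k) x (xlt a b k x hx) m
    rw [blockStart_succ, akbak_length] at h2
    set j := bidx (akbak a b k) x m with hj
    have hm : m = blockStart (akbak a b k) x j + (m - blockStart (akbak a b k) x j) := by omega
    rw [hm, y_eval a b k x hx j _ (by omega)] at hb
    refine ⟨j, ?_⟩
    by_cases hc : m - blockStart (akbak a b k) x j = k
    · omega
    · rw [if_neg hc] at hb; exact absurd hb hab
  · rintro ⟨j, rfl⟩
    rw [y_eval a b k x hx j k (by have := hx j; omega)]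
    simp

lemma S_congr (i i' m : ℕ) (h : ∀ t, t < m → x (i + t) = x (i' + t)) :
    blockStart (akbak a b k) (fun t => x (i + t)) m =
      blockStart (akbak a b k) (fun t => x (i' + t)) m := by
  induction m with
  | zero => rfl
  | succ m ih =>
    rw [blockStart_succ, blockStart_succ, ih (fun t ht => h t (by omega)), h m (by omega)]

lemma exists_block (f : ℕ → ℕ) (hmono : ∀ n, f n < f (n + 1)) (hf0 : f 0 = 0) :
    ∀ (N s : ℕ), s < f N → ∃ m, m < N ∧ f m ≤ s ∧ s < f (m + 1) := by
  intro N
  induction N with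
  | zero => intro s hs; omega
  | succ N ih =>
    intro s hs
    by_cases h : f N ≤ s
    · exact ⟨N, by omega, h, hs⟩
    · obtain ⟨m, hm1, hm2, hm3⟩ := ih s (by omega)
      exact ⟨m, by omega, hm2, hm3⟩

lemma seg_det (hx : ∀ n, x n ≤ k) (i i' N : ℕ) (h : ∀ t, t < N → x (i + t) = x (i' + t))
    (s : ℕ) (hs : s < blockStart (akbak a b k) (fun t => x (i + t)) N) :
    integrate (akbak a b k) (akbak_ne_nil a b k) x (blockStart (akbak a b k) x i + s) =
      integrate (akbak a b k) (akbak_ne_nil a b k) x (blockStart (akbak a b k) x i' + s) := by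
  obtain ⟨m, hmN, h1, h2⟩ := exists_block (blockStart (akbak a b k) (fun t => x (i + t)))
    (fun n => by
      rw [blockStart_succ, akbak_length]
      have := hx (i + n); omega) rfl N s hs
  have hxm : x (i + m) = x (i' + m) := h m hmN
  have hSm : blockStart (akbak a b k) (fun t => x (i + t)) m =
      blockStart (akbak a b k) (fun t => x (i' + t)) m :=
    S_congr a b k x i i' m (fun t ht => h t (by omega))
  rw [blockStart_succ, akbak_length] at h2
  have e1 : blockStart (akbak a b k) x i + s =
      blockStart (akbak a b k) x (i + m) +
        (s - blockStart (akbak a b k) (fun t => x (i + t)) m) := by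
    rw [blockStart_shift (akbak a b k) x i m]; omega
  have e2 : blockStart (akbak a b k) x i' + s =
      blockStart (akbak a b k) x (i' + m) +
        (s - blockStart (akbak a b k) (fun t => x (i + t)) m) := by
    rw [blockStart_shift (akbak a b k) x i' m, ← hSm]; omega
  rw [e1, e2, y_eval a b k x hx (i + m) _ (by omega),
    y_eval a b k x hx (i' + m) _ (by rw [← hxm]; omega)]

lemma decode_step (hab : a ≠ b) (hx : ∀ n, x n ≤ k) (i i' j : ℕ)
    (hS : blockStart (akbak a b k) (fun t => x (i + t)) j =
      blockStart (akbak a b k) (fun t => x (i' + t)) j)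
    (hb : integrate (akbak a b k) (akbak_ne_nil a b k) x
      (blockStart (akbak a b k) x i' +
        (blockStart (akbak a b k) (fun t => x (i + t)) (j + 1) + k)) = b) :
    blockStart (akbak a b k) (fun t => x (i' + t)) (j + 1) ≤
      blockStart (akbak a b k) (fun t => x (i + t)) (j + 1) := by
  obtain ⟨jj, hjj⟩ := (y_eq_b_iff a b k x hab hx _).1 hb
  have hbsjj : blockStart (akbak a b k) x jj =
      blockStart (akbak a b k) x i' +
        blockStart (akbak a b k) (fun t => x (i + t)) (j + 1) := by omega
  have hii : i' ≤ jj := by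
    by_contra hc
    push_neg at hc
    have := blockStart_strictMono (akbak a b k) x (xlt a b k x hx) hc
    omega
  obtain ⟨m, rfl⟩ : ∃ m, jj = i' + m := ⟨jj - i', by omega⟩
  rw [blockStart_shift (akbak a b k) x i' m] at hbsjj
  have hm : blockStart (akbak a b k) (fun t => x (i' + t)) m =
      blockStart (akbak a b k) (fun t => x (i + t)) (j + 1) := by omega
  have hstep : blockStart (akbak a b k) (fun t => x (i + t)) j <
      blockStart (akbak a b k) (fun t => x (i + t)) (j + 1) := by
    rw [blockStart_succ, akbak_length]
    have := hx (i + j); omega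
  have hmono := blockStart_strictMono (akbak a b k) (fun t => x (i' + t))
    (xlt a b k (fun t => x (i' + t)) (fun t => hx (i' + t)))
  have hjm : j < m := by
    by_contra hc
    push_neg at hc
    have := hmono.monotone hc
    omega
  have := hmono.monotone hjm
  simp only [Nat.succ_eq_add_one] at this
  omega

lemma decode (hab : a ≠ b) (hx : ∀ n, x n ≤ k) (n : ℕ) (hn : 1 ≤ n) (i i' : ℕ)
    (hseg : ∀ t, t < (3 * k + 2) * n →
      integrate (akbak a b k) (akbak_ne_nil a b k) x (blockStart (akbak a b k) x i + t) =
        integrate (akbak a b k) (akbak_ne_nil a b k) x (blockStart (akbak a b k) x i' + t)) :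
    ∀ j, j < n → x (i + j) = x (i' + j) := by
  have key : ∀ j, j ≤ n →
      blockStart (akbak a b k) (fun t => x (i + t)) j =
        blockStart (akbak a b k) (fun t => x (i' + t)) j := by
    intro j hj
    induction j with
    | zero => rfl
    | succ j ih =>
      have hS := ih (by omega)
      have hb1 : blockStart (akbak a b k) (fun t => x (i + t)) (j + 1) + k < (3 * k + 2) * n := by
        have h1 := blockStart_le_mul (akbak a b k) (fun t => x (i + t)) (j + 1)
        rw [akbak_length] at h1
        have h2 : (j + 1) * (2 * k + 1) ≤ n * (2 * k + 1) :=
          Nat.mul_le_mul_right _ (by omega)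
        have h3 : n * (2 * k + 1) + k < (3 * k + 2) * n := by nlinarith
        omega
      have hb2 : blockStart (akbak a b k) (fun t => x (i' + t)) (j + 1) + k < (3 * k + 2) * n := by
        have h1 := blockStart_le_mul (akbak a b k) (fun t => x (i' + t)) (j + 1)
        rw [akbak_length] at h1
        have h2 : (j + 1) * (2 * k + 1) ≤ n * (2 * k + 1) :=
          Nat.mul_le_mul_right _ (by omega)
        have h3 : n * (2 * k + 1) + k < (3 * k + 2) * n := by nlinarith
        omega
      have hbi : integrate (akbak a b k) (akbak_ne_nil a b k) x
          (blockStart (akbak a b k) x i +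
            (blockStart (akbak a b k) (fun t => x (i + t)) (j + 1) + k)) = b := by
        have e : blockStart (akbak a b k) x i +
            (blockStart (akbak a b k) (fun t => x (i + t)) (j + 1) + k) =
            blockStart (akbak a b k) x (i + (j + 1)) + k := by
          rw [blockStart_shift (akbak a b k) x i (j + 1)]; omega
        rw [e, y_eval a b k x hx _ k (by have := hx (i + (j + 1)); omega)]
        simp
      have hbi' : integrate (akbak a b k) (akbak_ne_nil a b k) x
          (blockStart (akbak a b k) x i' +
            (blockStart (akbak a b k) (fun t => x (i + t)) (j + 1) + k)) = b := by
        rw [← hseg _ hb1]; exact hbi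
      have h1 := decode_step a b k x hab hx i i' j hS hbi'
      have hbi2 : integrate (akbak a b k) (akbak_ne_nil a b k) x
          (blockStart (akbak a b k) x i' +
            (blockStart (akbak a b k) (fun t => x (i' + t)) (j + 1) + k)) = b := by
        have e : blockStart (akbak a b k) x i' +
            (blockStart (akbak a b k) (fun t => x (i' + t)) (j + 1) + k) =
            blockStart (akbak a b k) x (i' + (j + 1)) + k := by
          rw [blockStart_shift (akbak a b k) x i' (j + 1)]; omega
        rw [e, y_eval a b k x hx _ k (by have := hx (i' + (j + 1)); omega)]
        simp
      have hbi2' : integrate (akbak a b k) (akbak_ne_nil a b k) x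
          (blockStart (akbak a b k) x i +
            (blockStart (akbak a b k) (fun t => x (i' + t)) (j + 1) + k)) = b := by
        rw [hseg _ hb2]; exact hbi2
      have h2 := decode_step a b k x hab hx i' i j hS.symm hbi2'
      omega
  intro j hj
  have e1 := key j (by omega)
  have e2 := key (j + 1) (by omega)
  rw [blockStart_succ, blockStart_succ, akbak_length] at e2
  have := hx (i + j); have := hx (i' + j)
  omega

end Specialized

section Card

variable {A : Type*}

lemma factor_eq_ofFn (x : ℕ → A) (u : List A) (n i : ℕ) (hlen : u.length = n)
    (h : OccursAt x u i) : u = List.ofFn (fun t : Fin n => x (i + t)) := by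
  apply List.ext_getElem (by simp [hlen])
  intro t h1 h2
  rw [List.getElem_ofFn]
  exact (h ⟨t, h1⟩).symm

lemma occursAt_ofFn (x : ℕ → A) (i n : ℕ) :
    OccursAt x (List.ofFn fun t : Fin n => x (i + t)) i := by
  intro kk
  rw [List.get_eq_getElem, List.getElem_ofFn]

lemma eq_take_ofFn (x : ℕ → A) (u : List A) {m m' i : ℕ} (hm : m ≤ m') (hlen : u.length = m)
    (hocc : OccursAt x u i) : u = (List.ofFn fun t : Fin m' => x (i + t)).take m := by
  apply List.ext_getElem (by simp [hlen]; omega)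
  intro t h1 h2
  rw [List.getElem_take, List.getElem_ofFn]
  exact (hocc ⟨t, h1⟩).symm

lemma factors_finite (x : ℕ → A) (S : Set A) (hS : S.Finite) (hxS : ∀ i, x i ∈ S) (n : ℕ) :
    {u : List A | u.length = n ∧ IsFactor x u}.Finite := by
  apply Set.Finite.subset (Set.Finite.image List.ofFn (Set.Finite.pi fun _ : Fin n => hS))
  rintro u ⟨hlen, i, hocc⟩
  exact ⟨fun t => x (i + t), fun t _ => hxS _, (factor_eq_ofFn x u n i hlen hocc).symm⟩

open Classical in
noncomputable def occIdx (x : ℕ → A) (u : List A) : ℕ :=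
  if hu : ∃ i, OccursAt x u i then hu.choose else 0

lemma occIdx_spec (x : ℕ → A) (u : List A) (hu : IsFactor x u) : OccursAt x u (occIdx x u) := by
  rw [occIdx]
  split
  · exact (‹∃ i, OccursAt x u i›).choose_spec
  · exact absurd hu ‹_›

lemma complexity_mono (x : ℕ → A) (S : Set A) (hS : S.Finite) (hxS : ∀ i, x i ∈ S)
    {m m' : ℕ} (h : m ≤ m') : complexity x m ≤ complexity x m' := by
  apply Set.ncard_le_ncard_of_injOn
    (fun u => List.ofFn (fun t : Fin m' => x (occIdx x u + t)))
    ?_ ?_ (factors_finite x S hS hxS m')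
  · rintro u ⟨hlen, hu⟩
    exact ⟨by simp, occIdx x u, occursAt_ofFn x _ m'⟩
  · rintro u ⟨hlen, hu⟩ u' ⟨hlen', hu'⟩ hfe
    rw [eq_take_ofFn x u h hlen (occIdx_spec x u hu),
      eq_take_ofFn x u' h hlen' (occIdx_spec x u' hu')]
    simp only at hfe
    rw [hfe]

lemma ncard_prod {α β : Type*} (s : Set α) (t : Set β) :
    (s ×ˢ t).ncard = s.ncard * t.ncard := by
  rw [← Nat.card_coe_set_eq, ← Nat.card_coe_set_eq, ← Nat.card_coe_set_eq,
    Nat.card_congr (Equiv.Set.prod s t), Nat.card_prod]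

lemma ncard_Iio (c : ℕ) : (Set.Iio c : Set ℕ).ncard = c := by
  rw [← Finset.coe_Iio, Set.ncard_coe_finset, Nat.card_Iio]

end Card

end QPaux

open QPaux

/-- for every infinite word `x` over `{0, …, k}`, the word
`y = ∫_{a^k b a^k} x` is quasiperiodic and complexity equivalent to `x`. -/
theorem integration_akbak_quasiperiodic_and_complexity_equivalent
    {B : Type*} (a b : B) (hab : a ≠ b) (k : ℕ)
    (x : ℕ → ℕ) (hx : ∀ n, x n ≤ k) :
    (∃ q : List B, IsQuasiperiod (integrate (akbak a b k) (akbak_ne_nil a b k) x) q) ∧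
    ∃ K : ℕ, 0 < K ∧ ∀ n : ℕ, 1 ≤ n →
      complexity x n ≤ K * complexity (integrate (akbak a b k) (akbak_ne_nil a b k) x) (K * n) ∧
      complexity (integrate (akbak a b k) (akbak_ne_nil a b k) x) n ≤ K * complexity x (K * n) := by
  constructor
  · -- quasiperiodicity with quasiperiod a^k b a^k
    refine ⟨akbak a b k, blockStart (akbak a b k) x,
      blockStart_strictMono _ _ (xlt a b k x hx), rfl, ?_, ?_⟩
    · intro n kk
      obtain ⟨kv, hkv⟩ := kk
      have hkk : kv < 2 * k + 1 := by
        have h2 := hkv; rw [akbak_length] at h2; exact h2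
      show integrate (akbak a b k) (akbak_ne_nil a b k) x (blockStart (akbak a b k) x n + kv) =
        (akbak a b k).get ⟨kv, hkv⟩
      rw [List.get_eq_getElem, akbak_getElem a b k kv hkv]
      by_cases hc : kv < 2 * k + 1 - x n
      · rw [y_eval a b k x hx n kv hc]
      · have hxn := hx n
        have e : blockStart (akbak a b k) x n + kv
            = blockStart (akbak a b k) x (n + 1) + (kv - (2 * k + 1 - x n)) := by
          rw [blockStart_succ, akbak_length]; omega
        rw [e, y_eval a b k x hx (n + 1) _ (by have := hx (n + 1); omega),
          if_neg (by omega), if_neg (by omega)]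
    · intro n
      rw [blockStart_succ, akbak_length]
      omega
  · -- complexity equivalence with K = 3k+2
    refine ⟨3 * k + 2, by omega, ?_⟩
    intro n hn
    set y := integrate (akbak a b k) (akbak_ne_nil a b k) x with hy
    have hyfin : ∀ M, {v : List B | v.length = M ∧ IsFactor y v}.Finite := fun M =>
      factors_finite y {a, b} ((Set.finite_singleton b).insert a) (y_mem a b k x hx) M
    have hxfin : ∀ M, {u : List ℕ | u.length = M ∧ IsFactor x u}.Finite := fun M =>
      factors_finite x (Set.Iic k) (Set.finite_Iic k) hx M
    constructor
    · have h1 : complexity x n ≤ complexity y ((3 * k + 2) * n) := by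
        apply Set.ncard_le_ncard_of_injOn
          (fun u => List.ofFn (fun t : Fin ((3 * k + 2) * n) =>
            y (blockStart (akbak a b k) x (occIdx x u) + t)))
          ?_ ?_ (hyfin _)
        · rintro u ⟨hlen, hu⟩
          simp only [Set.mem_setOf_eq]
          exact ⟨by simp, blockStart (akbak a b k) x (occIdx x u), occursAt_ofFn y _ _⟩
        · rintro u ⟨hlen, hu⟩ u' ⟨hlen', hu'⟩ hfe
          simp only at hfe
          rw [List.ofFn_inj] at hfe
          have hseg : ∀ t, t < (3 * k + 2) * n →
              y (blockStart (akbak a b k) x (occIdx x u) + t) =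
                y (blockStart (akbak a b k) x (occIdx x u') + t) :=
            fun t ht => congrFun hfe ⟨t, ht⟩
          have hdec := decode a b k x hab hx n hn _ _ hseg
          rw [factor_eq_ofFn x u n _ hlen (occIdx_spec x u hu),
            factor_eq_ofFn x u' n _ hlen' (occIdx_spec x u' hu')]
          congr 1
          funext t
          exact hdec t t.2
      calc complexity x n ≤ complexity y ((3 * k + 2) * n) := h1
        _ ≤ (3 * k + 2) * complexity y ((3 * k + 2) * n) :=
            Nat.le_mul_of_pos_left _ (by omega)
    · have h2 : complexity y n ≤
          ({u : List ℕ | u.length = n + 1 ∧ IsFactor x u} ×ˢ (Set.Iio (2 * k + 1) : Set ℕ)).ncard := by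
        apply Set.ncard_le_ncard_of_injOn
          (fun v => (List.ofFn (fun t : Fin (n + 1) =>
              x (bidx (akbak a b k) x (occIdx y v) + t)),
            occIdx y v - blockStart (akbak a b k) x (bidx (akbak a b k) x (occIdx y v))))
          ?_ ?_ ((hxfin (n + 1)).prod (Set.finite_Iio _))
        · rintro v ⟨hlen, hv⟩
          simp only [Set.mem_prod, Set.mem_setOf_eq, Set.mem_Iio]
          refine ⟨⟨by simp, bidx (akbak a b k) x (occIdx y v), occursAt_ofFn x _ _⟩, ?_⟩
          obtain ⟨hs1, hs2⟩ := bidx_spec (akbak a b k) x (xlt a b k x hx) (occIdx y v)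
          rw [blockStart_succ, akbak_length] at hs2
          omega
        · rintro v ⟨hlen, hv⟩ v' ⟨hlen', hv'⟩ hfe
          simp only [Prod.mk.injEq] at hfe
          obtain ⟨hfe1, hfe2⟩ := hfe
          rw [List.ofFn_inj] at hfe1
          have hxeq : ∀ t, t < n + 1 →
              x (bidx (akbak a b k) x (occIdx y v) + t) =
                x (bidx (akbak a b k) x (occIdx y v') + t) :=
            fun t ht => congrFun hfe1 ⟨t, ht⟩
          have hocc := occIdx_spec y v hv
          have hocc' := occIdx_spec y v' hv'
          obtain ⟨hs1, hs2⟩ := bidx_spec (akbak a b k) x (xlt a b k x hx) (occIdx y v)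
          rw [blockStart_succ, akbak_length] at hs2
          obtain ⟨hs1', hs2'⟩ := bidx_spec (akbak a b k) x (xlt a b k x hx) (occIdx y v')
          rw [blockStart_succ, akbak_length] at hs2'
          apply List.ext_getElem (by rw [hlen, hlen'])
          intro t h1 h2
          have e1 : v[t] = y (occIdx y v + t) := by
            have := hocc ⟨t, h1⟩
            rw [List.get_eq_getElem] at this
            exact this.symm
          have e2 : v'[t] = y (occIdx y v' + t) := by
            have := hocc' ⟨t, h2⟩
            rw [List.get_eq_getElem] at this
            exact this.symm
          rw [e1, e2]
          have em : occIdx y v + t = blockStart (akbak a b k) x (bidx (akbak a b k) x (occIdx y v)) +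
              ((occIdx y v - blockStart (akbak a b k) x (bidx (akbak a b k) x (occIdx y v))) + t) := by
            omega
          have em' : occIdx y v' + t = blockStart (akbak a b k) x (bidx (akbak a b k) x (occIdx y v')) +
              ((occIdx y v - blockStart (akbak a b k) x (bidx (akbak a b k) x (occIdx y v))) + t) := by
            omega
          rw [em, em']
          apply seg_det a b k x hx _ _ (n + 1) hxeq
          have hS := mul_le_blockStart (akbak a b k)
            (fun s => x (bidx (akbak a b k) x (occIdx y v) + s)) (k + 1)
            (fun s => by
              show k + 1 ≤ (akbak a b k).length - x (bidx (akbak a b k) x (occIdx y v) + s)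
              rw [akbak_length]
              have := hx (bidx (akbak a b k) x (occIdx y v) + s); omega) (n + 1)
          have hkn : k ≤ n * k := Nat.le_mul_of_pos_left k (by omega)
          have hexp : (n + 1) * (k + 1) = n * k + n + k + 1 := by ring
          have hlt : t < n := by omega
          omega
      have h3 : ({u : List ℕ | u.length = n + 1 ∧ IsFactor x u} ×ˢ
          (Set.Iio (2 * k + 1) : Set ℕ)).ncard = complexity x (n + 1) * (2 * k + 1) := by
        rw [ncard_prod, ncard_Iio]
        rfl
      have h4 : complexity x (n + 1) ≤ complexity x ((3 * k + 2) * n) := by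
        apply complexity_mono x (Set.Iic k) (Set.finite_Iic k) hx
        have : 2 * n ≤ (3 * k + 2) * n := Nat.mul_le_mul_right n (by omega)
        omega
      calc complexity y n ≤ complexity x (n + 1) * (2 * k + 1) := by rw [← h3]; exact h2
        _ ≤ (3 * k + 2) * complexity x ((3 * k + 2) * n) := by
            rw [mul_comm]
            exact Nat.mul_le_mul (by omega) h4
end

section
/- If q is a quasiperiod of an infinite word x, then the number of distinct factors of x of length |q| is at most |q|², i.e. p_{|q|}(x) ≤ |q|². -/
open Filter MeasureTheory Topology

/-- Auxiliary coding word used in the proof below. -/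
private noncomputable def codeWord {A : Type*} (q : List A) (r t : Fin q.length) : List A :=
  List.ofFn (fun k : Fin q.length =>
    if hk : (r : ℕ) + k < q.length then q.get ⟨r + k, hk⟩
    else q.get ⟨(k : ℕ) - ((t : ℕ) + 1), lt_of_le_of_lt (Nat.sub_le _ _) k.isLt⟩)

/-- if `q` is a quasiperiod of `x` then `p_{|q|}(x) ≤ |q|²`. -/
theorem complexity_le_sq_of_quasiperiod {A : Type*} [Finite A]
    (x : ℕ → A) (q : List A) (h : IsQuasiperiod x q) :
    complexity x q.length ≤ q.length ^ 2 := by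
  obtain ⟨i, hmono, hi0, hocc, hgap⟩ := h
  have hLpos : 0 < q.length := by
    have h1 : i 1 - i 0 ≤ q.length := hgap 0
    have h2 := hmono (show 0 < 1 by norm_num)
    omega
  set g : Fin q.length × Fin q.length → List A := fun p => codeWord q p.1 p.2 with hg
  have hsub : {u : List A | u.length = q.length ∧ IsFactor x u} ⊆ Set.range g := by
    rintro u ⟨hulen, m, hum⟩
    -- find n with i n ≤ m < i (n + 1)
    classical
    set n := Nat.findGreatest (fun j => i j ≤ m) m with hn
    have hP0 : i 0 ≤ m := by omega
    have hle : i n ≤ m := Nat.findGreatest_spec (P := fun j => i j ≤ m) (Nat.zero_le m) hP0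
    have hself : ∀ j, j ≤ i j := fun j => hmono.le_apply
    have hgt : m < i (n + 1) := by
      by_contra hc
      push_neg at hc
      have hn1 : n + 1 ≤ m := le_trans (hself (n + 1)) hc
      exact Nat.findGreatest_is_greatest (show n < n + 1 by omega) hn1 hc
    have hgapn := hgap n
    have hrlt : m - i n < q.length := by omega
    have htlt : i (n + 1) - m - 1 < q.length := by omega
    set r : ℕ := m - i n with hr
    set t : ℕ := i (n + 1) - m - 1 with ht
    refine ⟨(⟨r, hrlt⟩, ⟨t, htlt⟩), ?_⟩
    set F : Fin q.length → A := fun k =>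
      if hk : r + (k : ℕ) < q.length then q.get ⟨r + k, hk⟩
      else q.get ⟨(k : ℕ) - (t + 1), lt_of_le_of_lt (Nat.sub_le _ _) k.isLt⟩ with hF
    show codeWord q ⟨r, hrlt⟩ ⟨t, htlt⟩ = u
    have hcw : codeWord q ⟨r, hrlt⟩ ⟨t, htlt⟩ = List.ofFn F := rfl
    rw [hcw]
    apply List.ext_getElem
    · rw [hulen]; simp
    · intro k h1 h2
      have hkL : k < q.length := by simpa using h1
      have hxu : x (m + k) = u[k] := by
        have := hum ⟨k, h2⟩
        simpa using this
      rw [List.getElem_ofFn]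
      simp only [hF, Fin.val_mk]
      by_cases hcase : r + k < q.length
      · rw [dif_pos hcase]
        have hq := hocc n ⟨r + k, hcase⟩
        have hmk : i n + (r + k) = m + k := by omega
        rw [← hxu, ← hq, hmk]
      · rw [dif_neg hcase]
        push_neg at hcase
        have hk2 : k - (t + 1) < q.length := by omega
        have hq := hocc (n + 1) ⟨k - (t + 1), hk2⟩
        have hmk : i (n + 1) + (k - (t + 1)) = m + k := by omega
        rw [← hxu, ← hq, hmk]
  calc complexity x q.length ≤ (Set.range g).ncard :=
        Set.ncard_le_ncard hsub (Set.finite_range g)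
    _ = (g '' Set.univ).ncard := by rw [Set.image_univ]
    _ ≤ (Set.univ : Set (Fin q.length × Fin q.length)).ncard :=
        Set.ncard_image_le Set.finite_univ
    _ = q.length ^ 2 := by
        rw [Set.ncard_univ]
        simp [Nat.card_eq_fintype_card, sq]
end

section
/- For every function f : ℕ → ℝ taking strictly positive values and converging to zero, there exists a multi-scale quasiperiodic infinite word x (over the alphabet {0,1}) such that (1/n)·log(p_n(x)) ≥ f(n) for infinitely many n. In particular, p_n(x) can grow faster than any polynomial along a subsequence. -/
open Filter MeasureTheory Topology

namespace QP

variable {α : Type*}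

lemma occursAt_of {x : ℕ → α} {u : List α} {i : ℕ}
    (h : ∀ j (hj : j < u.length), x (i + j) = u[j]) : OccursAt x u i :=
  fun k => h k k.isLt

lemma occursAt_get {x : ℕ → α} {u : List α} {i : ℕ} (h : OccursAt x u i)
    {j : ℕ} (hj : j < u.length) : x (i + j) = u[j] := h ⟨j, hj⟩

lemma occursAt_append {x : ℕ → α} {u v : List α} {i : ℕ}
    (hu : OccursAt x u i) (hv : OccursAt x v (i + u.length)) :
    OccursAt x (u ++ v) i := by
  apply occursAt_of
  intro j hj
  rcases lt_or_ge j u.length with h | h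
  · rw [List.getElem_append_left h]; exact occursAt_get hu h
  · rw [List.getElem_append_right h]
    have := occursAt_get hv (j := j - u.length)
      (by simp only [List.length_append] at hj; omega)
    rw [← this]; ring_nf; congr 1; omega

lemma occursAt_prefix {x : ℕ → α} {u v : List α} {i : ℕ}
    (hp : v <+: u) (hu : OccursAt x u i) : OccursAt x v i := by
  apply occursAt_of
  intro j hj
  rw [hp.getElem hj]
  exact occursAt_get hu (lt_of_lt_of_le hj hp.length_le)

lemma occursAt_ofFn {x : ℕ → α} {i n : ℕ} :
    OccursAt x (List.ofFn fun j : Fin n => x (i + j)) i := by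
  apply occursAt_of
  intro j hj
  have hj' : j < n := by simpa using hj
  simp [List.getElem_ofFn]

/-- partial sum of lengths of first `m` entries of a list of lists -/
def psum (L : List (List α)) (m : ℕ) : ℕ := ((L.take m).map List.length).sum

lemma psum_zero (L : List (List α)) : psum L 0 = 0 := rfl

lemma psum_succ (L : List (List α)) {m : ℕ} (hm : m < L.length) :
    psum L (m + 1) = psum L m + L[m].length := by
  unfold psum
  rw [List.map_take, List.map_take, List.sum_take_succ _ _ (by simpa using hm)]
  simp

lemma psum_cons (u : List α) (L : List (List α)) (m : ℕ) :
    psum (u :: L) (m + 1) = u.length + psum L m := by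
  simp [psum]

lemma occursAt_flatten {x : ℕ → α} {i : ℕ} (L : List (List α))
    (h : ∀ m (hm : m < L.length), OccursAt x L[m] (i + psum L m)) :
    OccursAt x L.flatten i := by
  induction L generalizing i with
  | nil => exact fun k => absurd k.isLt (by simp)
  | cons u L ih =>
    rw [List.flatten_cons]
    apply occursAt_append
    · exact (h 0 (by simp) : OccursAt x u (i + psum (u :: L) 0))
    · apply ih
      intro m hm
      have := h (m + 1) (by simpa using Nat.succ_lt_succ hm)
      rw [psum_cons] at this
      simpa [Nat.add_assoc, Nat.add_left_comm, Nat.add_comm] using this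

end QP

namespace QP

variable {α : Type*}

/-- start position of the `n`-th block when expanding `c` by `blk` -/
def Sfun (blk : Bool → List α) (c : ℕ → Bool) : ℕ → ℕ
  | 0 => 0
  | n + 1 => Sfun blk c n + (blk (c n)).length

/-- `z` is the expansion of the sequence `c` under the block map `blk`. -/
def Glue (blk : Bool → List α) (c : ℕ → Bool) (z : ℕ → α) : Prop :=
  ∀ n, OccursAt z (blk (c n)) (Sfun blk c n)

lemma Sfun_add (blk : Bool → List α) (c : ℕ → Bool) (p n : ℕ) :
    Sfun blk c (p + n) = Sfun blk c p + Sfun blk (fun m => c (p + m)) n := by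
  induction n with
  | zero => simp [Sfun]
  | succ n ih => rw [← Nat.add_assoc, Sfun, Sfun, ih]; ring

lemma Sfun_congr {blk : Bool → List α} {c c' : ℕ → Bool} {n : ℕ}
    (h : ∀ j, j < n → c j = c' j) : Sfun blk c n = Sfun blk c' n := by
  induction n with
  | zero => rfl
  | succ n ih =>
    rw [Sfun, Sfun, ih (fun j hj => h j (by omega)), h n (by omega)]

lemma Sfun_le {blk : Bool → List α} {M : ℕ} (hM : ∀ b, (blk b).length ≤ M)
    (c : ℕ → Bool) (n : ℕ) : Sfun blk c n ≤ n * M := by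
  induction n with
  | zero => simp [Sfun]
  | succ n ih =>
    rw [Sfun, Nat.succ_mul]
    exact Nat.add_le_add ih (hM _)

lemma occursAt_shift {z : ℕ → α} {u : List α} {a b : ℕ} :
    OccursAt z u (a + b) ↔ OccursAt (fun m => z (a + m)) u b := by
  constructor <;> intro h <;> apply occursAt_of <;> intro j hj <;>
    have := occursAt_get h hj
  · rwa [Nat.add_assoc] at this
  · rwa [← Nat.add_assoc] at this

lemma glue_shift {blk : Bool → List α} {c : ℕ → Bool} {z : ℕ → α}
    (hg : Glue blk c z) (p : ℕ) :
    Glue blk (fun m => c (p + m)) (fun m => z (Sfun blk c p + m)) := by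
  intro n
  rw [← occursAt_shift]
  have := hg (p + n)
  rwa [Sfun_add] at this

lemma Sfun_eq_of_agree {blk : Bool → List α} {c : ℕ → Bool} {s : List Bool}
    (hc : ∀ j (h : j < s.length), c j = s[j]) {m : ℕ} (hm : m ≤ s.length) :
    Sfun blk c m = psum (s.map blk) m := by
  induction m with
  | zero => rfl
  | succ m ih =>
    have hms : m < (s.map blk).length := by simpa using hm
    rw [Sfun, psum_succ _ hms, ih (by omega)]
    congr 2
    rw [hc m (by omega)]
    simp

lemma psum_full (L : List (List α)) : psum L L.length = L.flatten.length := by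
  simp [psum, List.length_flatten]

lemma glue_compose {sb : Bool → List Bool} {blk : Bool → List α}
    {c1 c0 : ℕ → Bool} {z : ℕ → α}
    (h1 : Glue sb c1 c0) (h0 : Glue blk c0 z) :
    Glue (fun b => ((sb b).map blk).flatten) c1 z ∧
    ∀ n, Sfun (fun b => ((sb b).map blk).flatten) c1 n = Sfun blk c0 (Sfun sb c1 n) := by
  have key : ∀ n, Sfun (fun b => ((sb b).map blk).flatten) c1 n
      = Sfun blk c0 (Sfun sb c1 n) := by
    intro n
    induction n with
    | zero => rfl
    | succ n ih =>
      rw [Sfun, Sfun, ih, Sfun_add]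
      congr 1
      have hocc : ∀ j (h : j < (sb (c1 n)).length),
          c0 (Sfun sb c1 n + j) = (sb (c1 n))[j] := fun j h => occursAt_get (h1 n) h
      rw [Sfun_eq_of_agree hocc (le_refl _),
        show (sb (c1 n)).length = ((sb (c1 n)).map blk).length by simp, psum_full]
  constructor
  · intro n
    rw [key]
    apply occursAt_flatten
    intro m hm
    have hm' : m < (sb (c1 n)).length := by simpa using hm
    have hocc : ∀ j (h : j < (sb (c1 n)).length),
        c0 (Sfun sb c1 n + j) = (sb (c1 n))[j] := fun j h => occursAt_get (h1 n) h
    have hS : Sfun blk c0 (Sfun sb c1 n + m)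
        = Sfun blk c0 (Sfun sb c1 n) + psum ((sb (c1 n)).map blk) m := by
      rw [Sfun_add]
      congr 1
      exact Sfun_eq_of_agree hocc (le_of_lt hm')
    have := h0 (Sfun sb c1 n + m)
    rw [hS, hocc m hm'] at this
    simpa using this
  · exact key

lemma blk_two {blk : Bool → List α} {d1 d2 : α} (hpref : ∀ b, [d1, d2] <+: blk b) :
    ∀ b, 2 ≤ (blk b).length ∧ (blk b)[0]'(by have := (hpref b).length_le; simp at this; omega) = d1
      ∧ (blk b)[1]'(by have := (hpref b).length_le; simp at this; omega) = d2 := by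
  intro b
  have hl : 2 ≤ (blk b).length := by have := (hpref b).length_le; simpa using this
  refine ⟨hl, ?_, ?_⟩
  · rw [← (hpref b).getElem (i := 0) (by simp)]; rfl
  · rw [← (hpref b).getElem (i := 1) (by simp)]; rfl

lemma lemDiff {blk : Bool → List α} {d1 d2 : α}
    (hsplit : blk true = blk false ++ [d1])
    (hpref : ∀ b, [d1, d2] <+: blk b)
    {c c' : ℕ → Bool} {z z' : ℕ → α}
    (hg : Glue blk c z) (hg' : Glue blk c' z')
    {i : ℕ} (hagree : ∀ j, j < i → c j = c' j)
    (hci : c i = true) (hc'i : c' i = false) :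
    (∀ j, j < Sfun blk c i + (blk false).length + 1 → z j = z' j) ∧
    z (Sfun blk c i + (blk false).length + 1) = d1 ∧
    z' (Sfun blk c i + (blk false).length + 1) = d2 := by
  set S := Sfun blk c with hSdef
  set S' := Sfun blk c' with hS'def
  have hS : ∀ n, n ≤ i → S n = S' n := fun n hn =>
    Sfun_congr (fun j hj => hagree j (by omega))
  have hz : ∀ n j (h : j < (blk (c n)).length), z (S n + j) = (blk (c n))[j] :=
    fun n j h => occursAt_get (hg n) h
  have hz' : ∀ n j (h : j < (blk (c' n)).length), z' (S' n + j) = (blk (c' n))[j] :=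
    fun n j h => occursAt_get (hg' n) h
  have hlen : (blk true).length = (blk false).length + 1 := by rw [hsplit]; simp
  -- agreement on earlier full blocks
  have claim1 : ∀ n, n ≤ i → ∀ j, j < S n → z j = z' j := by
    intro n
    induction n with
    | zero => intro _ j hj; simp [hSdef, Sfun] at hj
    | succ n ih =>
      intro hn j hj
      rcases lt_or_ge j (S n) with h | h
      · exact ih (by omega) j h
      · obtain ⟨l, rfl⟩ : ∃ l, j = S n + l := ⟨j - S n, by omega⟩
        have hl : l < (blk (c n)).length := by
          have : S (n+1) = S n + (blk (c n)).length := rfl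
          omega
        have hc : c n = c' n := hagree n (by omega)
        have e1 : z (S n + l) = (blk (c n))[l] := hz n l hl
        have e2 : z' (S n + l) = (blk (c n))[l] := by
          rw [hS n (by omega)]
          have := hz' n l (by rw [← hc]; exact hl)
          rw [this]
          simp [hc]
        rw [e1, e2]
  have hSi : S' i = S i := (hS i le_rfl).symm
  have hSsucc : ∀ n, S (n+1) = S n + (blk (c n)).length := fun n => rfl
  have hSsucc' : ∀ n, S' (n+1) = S' n + (blk (c' n)).length := fun n => rfl
  have h2 := blk_two hpref
  refine ⟨?_, ?_, ?_⟩
  · intro j hj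
    rcases lt_or_ge j (S i) with h | h
    · exact claim1 i le_rfl j h
    · obtain ⟨l, rfl⟩ : ∃ l, j = S i + l := ⟨j - S i, by omega⟩
      have hl : l ≤ (blk false).length := by omega
      rcases lt_or_eq_of_le hl with h | h
      · -- inside the common part blk false
        have e1 : z (S i + l) = (blk false)[l]'h := by
          have := hz i l (by rw [hci, hlen]; omega)
          rw [this]
          simp only [hci, hsplit]
          rw [List.getElem_append_left h]
        have e2 : z' (S i + l) = (blk false)[l]'h := by
          rw [← hSi]
          have := hz' i l (by rw [hc'i]; omega)
          rw [this]
          simp [hc'i]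
        rw [e1, e2]
      · -- position S i + |blk false| : z has d1, z' has head of next block = d1
        subst h
        have e1 : z (S i + (blk false).length) = d1 := by
          have hlt : (blk false).length < (blk (c i)).length := by rw [hci, hlen]; omega
          rw [hz i (blk false).length hlt]
          simp only [hci, hsplit]
          exact List.getElem_concat_length rfl (by simp)
        have e2 : z' (S i + (blk false).length) = d1 := by
          have hpos : S i + (blk false).length = S' (i + 1) := by
            rw [hSsucc', hSi, hc'i]
          rw [hpos]
          have := hz' (i+1) 0 (by have := (h2 (c' (i+1))).1; omega)
          rw [Nat.add_zero] at this
          rw [this]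
          exact (h2 (c' (i+1))).2.1
        rw [e1, e2]
  · -- z at q = d1
    have hq : S i + (blk false).length + 1 = S (i + 1) := by
      rw [hSsucc, hci, hlen]; omega
    rw [hq]
    have := hz (i+1) 0 (by have := (h2 (c (i+1))).1; omega)
    rw [Nat.add_zero] at this
    rw [this]
    exact (h2 (c (i+1))).2.1
  · -- z' at q = d2
    have hq : S i + (blk false).length + 1 = S' (i + 1) + 1 := by
      rw [hSsucc', hSi, hc'i]
    rw [hq]
    have := hz' (i+1) 1 (by have := (h2 (c' (i+1))).1; omega)
    rw [this]
    exact (h2 (c' (i+1))).2.2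

end QP

namespace QP

/-! ### The construction -/

/-- all Boolean sequences of length `n` -/
def allseqs : ℕ → List (List Bool)
  | 0 => [[]]
  | n + 1 => (allseqs n).map (true :: ·) ++ (allseqs n).map (false :: ·)

lemma mem_allseqs (s : List Bool) : s ∈ allseqs s.length := by
  induction s with
  | nil => simp [allseqs]
  | cons b s ih =>
    cases b <;> simpa [allseqs] using ih

def seqB (t : ℕ) : List Bool := true :: false :: (allseqs t).flatten

def seqA (t : ℕ) : List Bool := seqB t ++ [true]

lemma seqB_len (t : ℕ) : 2 ≤ (seqB t).length := by simp [seqB]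

lemma seqA_len (t : ℕ) : (seqA t).length = (seqB t).length + 1 := by simp [seqA]

variable (tt : ℕ → ℕ)

/-- the blocks of level `k+1` as sequences of level-`k` blocks -/
def seqblk (k : ℕ) : Bool → List Bool := fun b => bif b then seqA (tt k) else seqB (tt k)

lemma seqblk_split (k : ℕ) : seqblk tt k true = seqblk tt k false ++ [true] := rfl

lemma seqblk_pref (k : ℕ) (b : Bool) : [true, false] <+: seqblk tt k b := by
  cases b
  · exact ⟨(allseqs (tt k)).flatten, rfl⟩
  · exact ⟨(allseqs (tt k)).flatten ++ [true], by simp [seqblk, seqA, seqB]⟩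

lemma seqblk_len_le (k : ℕ) (b : Bool) : (seqblk tt k b).length ≤ (seqA (tt k)).length := by
  cases b <;> simp [seqblk, seqA]

/-- the word of the level-`k` block `b` -/
def W : ℕ → Bool → List (Fin 2)
  | 0, b => bif b then [0, 1, 0] else [0, 1]
  | k + 1, b => ((seqblk tt k b).map (W k)).flatten

/-- the level-`k` block sequence of the block `b` of level `k+j` -/
def decW (k : ℕ) : ℕ → Bool → List Bool
  | 0, b => [b]
  | j + 1, b => ((seqblk tt (k + j) b).map (decW k j)).flatten

lemma flatten_map_singleton {γ : Type*} (l : List γ) :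
    (l.map (fun a => [a])).flatten = l := by
  induction l with
  | nil => rfl
  | cons a l ih => simp [ih]

lemma flatten_map_flatten {γ : Type*} (g : Bool → List γ) (M : List (List Bool)) :
    (M.map (fun l => (l.map g).flatten)).flatten = ((M.flatten).map g).flatten := by
  induction M with
  | nil => rfl
  | cons l M ih => simp [List.map_append, List.flatten_append, ih]

lemma decW_exp (k : ℕ) : ∀ j b,
    decW tt k (j + 1) b = ((decW tt (k + 1) j b).map (seqblk tt k)).flatten := by
  intro j
  induction j with
  | zero =>
    intro b
    show ((seqblk tt (k+0) b).map (decW tt k 0)).flatten = _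
    simp only [decW]
    rw [flatten_map_singleton]
    simp [decW]
  | succ j ih =>
    intro b
    show ((seqblk tt (k + (j+1)) b).map (decW tt k (j+1))).flatten = _
    have harg : k + 1 + j = k + (j + 1) := by omega
    have hih : decW tt k (j+1)
        = fun b' => ((decW tt (k + 1) j b').map (seqblk tt k)).flatten := funext ih
    calc ((seqblk tt (k + (j+1)) b).map (decW tt k (j+1))).flatten
        = ((seqblk tt (k + (j+1)) b).map
            (fun b' => ((decW tt (k + 1) j b').map (seqblk tt k)).flatten)).flatten := by
          rw [hih]
      _ = ((((seqblk tt (k + (j+1)) b).map (decW tt (k+1) j)).map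
            (fun l => (l.map (seqblk tt k)).flatten)).flatten) := by
          rw [List.map_map]; rfl
      _ = ((((seqblk tt (k + (j+1)) b).map (decW tt (k+1) j)).flatten).map
            (seqblk tt k)).flatten := flatten_map_flatten _ _
      _ = ((decW tt (k+1) (j+1) b).map (seqblk tt k)).flatten := by
          show _ = (((seqblk tt (k+1+j) b).map (decW tt (k+1) j)).flatten.map
            (seqblk tt k)).flatten
          rw [harg]

/-- level-0 letters; `W tt 0` -/
lemma W_dec : ∀ j b, W tt j b = ((decW tt 0 j b).map (W tt 0)).flatten := by
  intro j
  induction j with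
  | zero => intro b; simp [decW, W, flatten_map_singleton]
  | succ j ih =>
    intro b
    show ((seqblk tt j b).map (W tt j)).flatten = _
    have hih : W tt j = fun b' => ((decW tt 0 j b').map (W tt 0)).flatten := funext ih
    calc ((seqblk tt j b).map (W tt j)).flatten
        = ((seqblk tt j b).map (fun b' => ((decW tt 0 j b').map (W tt 0)).flatten)).flatten := by
          rw [hih]
      _ = (((seqblk tt j b).map (decW tt 0 j)).map
            (fun l => (l.map (W tt 0)).flatten)).flatten := by rw [List.map_map]; rfl
      _ = ((((seqblk tt j b).map (decW tt 0 j)).flatten).map (W tt 0)).flatten :=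
          flatten_map_flatten _ _
      _ = _ := by
          show _ = (((seqblk tt (0+j) b).map (decW tt 0 j)).flatten.map (W tt 0)).flatten
          rw [Nat.zero_add]

lemma decW_len (k : ℕ) : ∀ j b, j + 1 ≤ (decW tt k j b).length := by
  intro j
  induction j with
  | zero => intro b; simp [decW]
  | succ j ih =>
    intro b
    obtain ⟨r, hr⟩ := seqblk_pref tt (k + j) b
    show j + 2 ≤ (((seqblk tt (k+j) b).map (decW tt k j)).flatten).length
    rw [← hr]
    simp only [List.map_append, List.flatten_append, List.map_cons, List.flatten_cons,
      List.length_append]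
    have h1 := ih true
    have h2 := ih false
    simp only [List.map_nil, List.flatten_nil]
    omega

lemma decW_prefix (k j : ℕ) : decW tt k j true <+: decW tt k (j + 1) true := by
  obtain ⟨r, hr⟩ := seqblk_pref tt (k + j) true
  show decW tt k j true <+: ((seqblk tt (k+j) true).map (decW tt k j)).flatten
  rw [← hr]
  simp only [List.map_append, List.flatten_append, List.map_cons, List.flatten_cons]
  exact ⟨decW tt k j false ++ ((r.map (decW tt k j)).flatten ++ []), by simp⟩

lemma W_len (k : ℕ) (b : Bool) : 2 ≤ (W tt k b).length := by
  cases k with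
  | zero => cases b <;> simp [W]
  | succ k =>
    obtain ⟨r, hr⟩ := seqblk_pref tt k b
    show 2 ≤ (((seqblk tt k b).map (W tt k)).flatten).length
    rw [← hr]
    simp only [List.map_append, List.flatten_append, List.map_cons, List.flatten_cons,
      List.length_append]
    have := W_len k true
    omega

lemma W_prefix (j : ℕ) : W tt j true <+: W tt (j + 1) true := by
  obtain ⟨r, hr⟩ := seqblk_pref tt j true
  show W tt j true <+: ((seqblk tt j true).map (W tt j)).flatten
  rw [← hr]
  simp only [List.map_append, List.flatten_append, List.map_cons, List.flatten_cons]
  exact ⟨W tt j false ++ ((r.map (W tt j)).flatten ++ []), by simp⟩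

/-- generic chain-prefix lemma -/
lemma chain_prefix {γ : Type*} {P : ℕ → List γ} (h : ∀ j, P j <+: P (j + 1)) :
    ∀ {j j'}, j ≤ j' → P j <+: P j' := by
  intro j j' hj
  induction j' with
  | zero => rw [Nat.le_zero.mp hj]
  | succ j' ih =>
    rcases Nat.lt_or_ge j (j' + 1) with h' | h'
    · exact (ih (by omega)).trans (h j')
    · rw [Nat.le_antisymm hj h']

lemma chain_getD {γ : Type*} {P : ℕ → List γ} (h : ∀ j, P j <+: P (j + 1))
    {j j' n : ℕ} (hn : n < (P j).length) (hn' : n < (P j').length) (d : γ) :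
    (P j).getD n d = (P j').getD n d := by
  rcases Nat.le_total j j' with hle | hle
  · rw [List.getD_eq_getElem _ _ hn, List.getD_eq_getElem _ _ hn',
      (chain_prefix h hle).getElem hn]
  · rw [List.getD_eq_getElem _ _ hn, List.getD_eq_getElem _ _ hn',
      (chain_prefix h hle).getElem hn']

/-- the level-`k` block sequence of the limit word -/
def yy (k : ℕ) : ℕ → Bool := fun n => (decW tt k (n + 1) true).getD n false

/-- the limit word itself -/
noncomputable def xw : ℕ → Fin 2 := fun n => (W tt (n + 1) true).getD n (0 : Fin 2)

lemma yy_agree (k j n : ℕ) (h : n < (decW tt k j true).length) :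
    yy tt k n = (decW tt k j true).getD n false := by
  refine chain_getD (fun j' => decW_prefix tt k j') ?_ h false
  have := decW_len tt k (n + 1) true
  omega

lemma xw_agree (j n : ℕ) (h : n < (W tt j true).length) :
    xw tt n = (W tt j true).getD n (0 : Fin 2) := by
  refine chain_getD (fun j' => W_prefix tt j') ?_ h (0 : Fin 2)
  have h1 : n + 2 ≤ (W tt (n+1) true).length := by
    induction n with
    | zero => exact W_len tt 1 true
    | succ n ih =>
      have hp := W_prefix tt (n + 1)
      have h2 := W_len tt (n + 1) false
      obtain ⟨r, hr⟩ := seqblk_pref tt (n + 1) true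
      have : (W tt (n+1+1) true).length
          = (W tt (n+1) true ++ W tt (n+1) false ++ (r.map (W tt (n+1))).flatten).length := by
        show (((seqblk tt (n+1) true).map (W tt (n+1))).flatten).length = _
        rw [← hr]
        simp
      simp only [List.length_append] at this
      omega
  omega

end QP

namespace QP

variable {γ : Type*}

lemma psum_add_lt {L : List (List γ)} : ∀ {n}, ∀ (hn : n < L.length), ∀ {l}, l < L[n].length →
    psum L n + l < L.flatten.length := by
  induction L with
  | nil => intro n hn; simp at hn
  | cons u L ih =>
    intro n hn l hl
    cases n with
    | zero =>
      simp only [psum_zero, Nat.zero_add, List.flatten_cons, List.length_append]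
      simp only [List.getElem_cons_zero] at hl
      omega
    | succ n =>
      rw [psum_cons]
      simp only [List.getElem_cons_succ] at hl
      have := ih (n := n) (by simpa using hn) hl
      simp only [List.flatten_cons, List.length_append]
      omega

lemma flatten_getElem_psum {L : List (List γ)} : ∀ {n}, ∀ (hn : n < L.length), ∀ {l},
    ∀ (hl : l < L[n].length), ∀ (hb : psum L n + l < L.flatten.length),
    L.flatten[psum L n + l] = L[n][l] := by
  induction L with
  | nil => intro n hn; simp at hn
  | cons u L ih =>
    intro n hn l hl hb
    cases n with
    | zero =>
      simp only [List.getElem_cons_zero] at hl ⊢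
      simp only [psum_zero, Nat.zero_add, List.flatten_cons] at hb ⊢
      exact List.getElem_append_left hl
    | succ n =>
      simp only [List.getElem_cons_succ] at hl ⊢
      have hn' : n < L.length := by simpa using hn
      have hb' : psum L n + l < L.flatten.length := psum_add_lt hn' hl
      have e : psum (u :: L) (n+1) + l = u.length + (psum L n + l) := by
        rw [psum_cons]; omega
      simp only [List.flatten_cons]
      simp only [e]
      rw [List.getElem_append_right (by omega)]
      simp only [Nat.add_sub_cancel_left]
      exact ih hn' hl hb'

lemma glueOfChains {blk : Bool → List γ} {C : ℕ → List Bool} {c : ℕ → Bool}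
    {z : ℕ → γ} (dz : γ)
    (hClen : ∀ n, n < (C (n + 1)).length)
    (hagree : ∀ j n, n < (C j).length → c n = (C j).getD n false)
    (hz : ∀ j m, m < (((C j).map blk).flatten).length →
        z m = (((C j).map blk).flatten).getD m dz) :
    Glue blk c z := by
  intro n
  set j := n + 1 with hj
  set L := (C j).map blk with hL
  have hnC : n < (C j).length := hClen n
  have hnL : n < L.length := by simpa [hL] using hnC
  have hcn : ∀ m (h : m < (C j).length), c m = (C j)[m] := by
    intro m h
    rw [hagree j m h, List.getD_eq_getElem _ _ h]
  have hS : Sfun blk c n = psum L n :=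
    Sfun_eq_of_agree hcn (le_of_lt hnC)
  apply occursAt_of
  intro l hl
  have hLn : L[n] = blk ((C j)[n]) := List.getElem_map _
  have hl' : l < L[n].length := by rw [hLn, ← hcn n hnC]; exact hl
  have hb : psum L n + l < L.flatten.length := psum_add_lt hnL hl'
  rw [hS, hz j _ hb, List.getD_eq_getElem _ _ hb, flatten_getElem_psum hnL hl' hb]
  have hbc : blk (c n) = L[n] := by rw [hLn, hcn n hnC]
  exact (List.getElem_of_eq hbc hl).symm

variable (tt : ℕ → ℕ)

lemma glue_seq (k : ℕ) : Glue (seqblk tt k) (yy tt (k + 1)) (yy tt k) := by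
  apply glueOfChains (C := fun j => decW tt (k+1) j true) false
  · intro n
    have := decW_len tt (k+1) (n+1) true
    omega
  · intro j n h
    exact yy_agree tt (k+1) j n h
  · intro j m h
    rw [← decW_exp] at h ⊢
    exact yy_agree tt k (j+1) m h

lemma W_zero : W tt 0 = fun b => bif b then [0, 1, 0] else [0, 1] := by
  funext b; cases b <;> rfl

lemma W_succ_eq (k : ℕ) : W tt (k + 1) = fun b => ((seqblk tt k b).map (W tt k)).flatten := by
  funext b; rfl

lemma glue_xw : ∀ k, Glue (W tt k) (yy tt k) (xw tt) := by
  intro k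
  induction k with
  | zero =>
    apply glueOfChains (C := fun j => decW tt 0 j true) (0 : Fin 2)
    · intro n
      have := decW_len tt 0 (n+1) true
      omega
    · intro j n h
      exact yy_agree tt 0 j n h
    · intro j m h
      rw [← W_dec] at h ⊢
      exact xw_agree tt j m h
  | succ k ih =>
    have := (glue_compose (glue_seq tt k) ih).1
    rwa [← W_succ_eq] at this

lemma Sfun_W_succ (k n : ℕ) :
    Sfun (W tt (k + 1)) (yy tt (k + 1)) n
      = Sfun (W tt k) (yy tt k) (Sfun (seqblk tt k) (yy tt (k + 1)) n) := by
  have := (glue_compose (glue_seq tt k) (glue_xw tt k)).2 n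
  rw [W_succ_eq]
  exact this

/-! ### Quasiperiodicity -/

def rW : ℕ → List (Fin 2)
  | 0 => [0]
  | k + 1 => W tt k true

lemma W_split (k : ℕ) : W tt k true = W tt k false ++ rW tt k := by
  cases k with
  | zero => rfl
  | succ k =>
    show ((seqblk tt k true).map (W tt k)).flatten = _
    rw [seqblk_split, List.map_append, List.flatten_append]
    show _ = ((seqblk tt k false).map (W tt k)).flatten ++ W tt k true
    simp

lemma rW_pref_false (k : ℕ) : rW tt k <+: W tt k false := by
  cases k with
  | zero => exact ⟨[1], rfl⟩
  | succ k =>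
    obtain ⟨r, hr⟩ := seqblk_pref tt k false
    show W tt k true <+: ((seqblk tt k false).map (W tt k)).flatten
    rw [← hr]
    exact ⟨W tt k false ++ (r.map (W tt k)).flatten, by simp⟩

lemma rW_pref (k : ℕ) (b : Bool) : rW tt k <+: W tt k b := by
  cases b
  · exact rW_pref_false tt k
  · exact (rW_pref_false tt k).trans ⟨rW tt k, (W_split tt k).symm⟩

lemma W_false_le (k : ℕ) : (W tt k false).length ≤ (W tt k true).length := by
  rw [W_split]; simp

lemma isQP (k : ℕ) : IsQuasiperiod (xw tt) (W tt k true) := by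
  set S := Sfun (W tt k) (yy tt k) with hS
  have hSsucc : ∀ n, S (n + 1) = S n + (W tt k (yy tt k n)).length := fun n => rfl
  refine ⟨S, ?_, rfl, ?_, ?_⟩
  · apply strictMono_nat_of_lt_succ
    intro n
    have := W_len tt k (yy tt k n)
    rw [hSsucc]
    omega
  · intro n
    cases hyn : yy tt k n with
    | true =>
      have := glue_xw tt k n
      rwa [hyn] at this
    | false =>
      have h1 : OccursAt (xw tt) (W tt k false) (S n) := by
        have := glue_xw tt k n
        rwa [hyn] at this
      have h2 : OccursAt (xw tt) (rW tt k) (S (n + 1)) :=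
        occursAt_prefix (rW_pref tt k (yy tt k (n+1))) (glue_xw tt k (n+1))
      have hSn : S (n + 1) = S n + (W tt k false).length := by rw [hSsucc, hyn]
      rw [W_split]
      exact occursAt_append h1 (hSn ▸ h2)
  · intro n
    have h1 : (W tt k (yy tt k n)).length ≤ (W tt k true).length := by
      cases yy tt k n
      · exact W_false_le tt k
      · exact le_refl _
    rw [hSsucc]
    omega

lemma W_true_len_lt (k : ℕ) : (W tt k true).length < (W tt (k + 1) true).length := by
  have h2 := W_len tt (k+1) false
  have h3 : (W tt (k+1) true).length = (W tt (k+1) false).length + (W tt k true).length := by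
    conv_lhs => rw [W_split]
    simp [rW]
  omega

lemma multiscale : MultiScaleQuasiperiodic (xw tt) := by
  refine Set.infinite_of_injective_forall_mem (f := fun k => W tt k true) ?_ ?_
  · have hmono : StrictMono (fun k => (W tt k true).length) :=
      strictMono_nat_of_lt_succ (W_true_len_lt tt)
    intro a b hab
    exact hmono.injective (congrArg List.length hab)
  · intro k
    exact isQP tt k

end QP

namespace QP

variable (tt : ℕ → ℕ)

/-! ### Complexity lower bound -/

def NN : ℕ → ℕ
  | 0 => 6
  | k + 1 => 2 * (seqA (tt k)).length * NN k

lemma seqA_ge (t : ℕ) : 3 ≤ (seqA t).length := by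
  rw [seqA_len]
  have := seqB_len t
  omega

lemma NN_ge (k : ℕ) : k + 6 ≤ NN tt k := by
  induction k with
  | zero => simp [NN]
  | succ k ih =>
    have hL := seqA_ge (tt k)
    have h4 : 6 * NN tt k ≤ 2 * (seqA (tt k)).length * NN tt k :=
      Nat.mul_le_mul_right _ (by omega)
    show k + 1 + 6 ≤ 2 * (seqA (tt k)).length * NN tt k
    omega

lemma NN_pos (k : ℕ) : 0 < NN tt k := by
  have := NN_ge tt k
  omega

lemma down : ∀ k p p' i, (∀ j, j < i → yy tt k (p + j) = yy tt k (p' + j)) →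
    yy tt k (p + i) = true → yy tt k (p' + i) = false →
    ∃ q, q < (i + 1) * NN tt k ∧
      xw tt (Sfun (W tt k) (yy tt k) p + q) = 0 ∧
      xw tt (Sfun (W tt k) (yy tt k) p' + q) = 1 := by
  intro k
  induction k with
  | zero =>
    intro p p' i hagr hp hp'
    have hsplit : W tt 0 true = W tt 0 false ++ [(0 : Fin 2)] := rfl
    have hpref : ∀ b, [(0 : Fin 2), 1] <+: W tt 0 b := by
      intro b
      cases b
      · exact ⟨[], by simp; rfl⟩
      · exact ⟨[0], rfl⟩
    have g := glue_shift (glue_xw tt 0) p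
    have g' := glue_shift (glue_xw tt 0) p'
    have hld := lemDiff hsplit hpref g g' hagr hp hp'
    set q := Sfun (W tt 0) (fun m => yy tt 0 (p + m)) i + (W tt 0 false).length + 1 with hq
    refine ⟨q, ?_, hld.2.1, hld.2.2⟩
    have hM : ∀ b, (W tt 0 b).length ≤ 3 := by intro b; cases b <;> simp [W_zero]
    have hS := Sfun_le hM (fun m => yy tt 0 (p + m)) i
    have h2 : (W tt 0 false).length = 2 := by simp [W_zero]
    have h6 : NN tt 0 = 6 := rfl
    rw [hq, h2, h6]
    omega
  | succ k ih =>
    intro p p' i hagr hp hp'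
    have g := glue_shift (glue_seq tt k) p
    have g' := glue_shift (glue_seq tt k) p'
    have hld := lemDiff (seqblk_split tt k) (seqblk_pref tt k) g g' hagr hp hp'
    set S1 := Sfun (seqblk tt k) (yy tt (k + 1)) with hS1
    set q1 := Sfun (seqblk tt k) (fun m => yy tt (k + 1) (p + m)) i
      + (seqblk tt k false).length + 1 with hq1
    obtain ⟨q, hq, h0, h1⟩ := ih (S1 p) (S1 p') q1 hld.1 hld.2.1 hld.2.2
    set L := (seqA (tt k)).length with hL
    have hLpos : 3 ≤ L := seqA_ge (tt k)
    have hlen : (seqblk tt k false).length + 1 = L := by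
      show (seqB (tt k)).length + 1 = L
      rw [hL, seqA_len]
    have hS := Sfun_le (seqblk_len_le tt k) (fun m => yy tt (k + 1) (p + m)) i
    rw [← hL] at hS
    have hq1b : q1 + 1 ≤ (i + 1) * L + 1 := by
      rw [hq1]
      have : i * L + L + 1 + 1 = (i+1) * L + 2 := by ring
      omega
    have hpos1 : 0 < (i + 1) * L := Nat.mul_pos (by omega) (by omega)
    have hq1c : q1 + 1 ≤ 2 * ((i + 1) * L) := by omega
    have hNN : NN tt (k + 1) = 2 * L * NN tt k := rfl
    refine ⟨q, ?_, ?_, ?_⟩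
    · calc q < (q1 + 1) * NN tt k := hq
        _ ≤ (2 * ((i + 1) * L)) * NN tt k := Nat.mul_le_mul_right _ hq1c
        _ = (i + 1) * NN tt (k + 1) := by rw [hNN]; ring
    · rw [Sfun_W_succ]
      exact h0
    · rw [Sfun_W_succ]
      exact h1

lemma decW_one (k : ℕ) : decW tt k 1 true = seqA (tt k) := by
  show ((seqblk tt (k + 0) true).map (decW tt k 0)).flatten = _
  rw [Nat.add_zero]
  show ((seqA (tt k)).map (fun b => [b])).flatten = _
  exact flatten_map_singleton _

lemma exists_pos (k : ℕ) (s : List Bool) (hs : s.length = tt k) :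
    ∃ p, ∀ j, j < s.length → yy tt k (p + j) = s.getD j false := by
  have h1 : s ∈ allseqs (tt k) := hs ▸ mem_allseqs s
  obtain ⟨u, v, huv⟩ := List.infix_of_mem_flatten h1
  have hseqA : seqA (tt k) = (true :: false :: u) ++ (s ++ (v ++ [true])) := by
    simp [seqA, seqB, ← huv]
  refine ⟨(true :: false :: u).length, ?_⟩
  intro j hj
  have hlt : (true :: false :: u).length + j < (seqA (tt k)).length := by
    rw [hseqA]
    simp only [List.length_append, List.length_cons]
    omega
  have hd1 := decW_one tt k
  have hlt' : (true :: false :: u).length + j < (decW tt k 1 true).length := by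
    rw [hd1]; exact hlt
  rw [yy_agree tt k 1 _ hlt', hd1, List.getD_eq_getElem _ _ hlt,
    List.getD_eq_getElem _ _ hj]
  rw [List.getElem_of_eq hseqA _, List.getElem_append_right (Nat.le_add_right _ _)]
  simp only [Nat.add_sub_cancel_left]
  exact List.getElem_append_left hj

lemma complexity_lower (k : ℕ) :
    2 ^ (tt k) ≤ complexity (xw tt) ((tt k + 1) * NN tt k) := by
  classical
  set t := tt k with htdef
  set n := (t + 1) * NN tt k with hndef
  have hposx : ∀ v : Fin t → Bool, ∃ p, ∀ j (hj : j < t), yy tt k (p + j) = v ⟨j, hj⟩ := by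
    intro v
    obtain ⟨p, hp⟩ := exists_pos tt k (List.ofFn v) (by simp [htdef])
    refine ⟨p, fun j hj => ?_⟩
    rw [hp j (by simp [hj]), List.getD_eq_getElem _ _ (by simp [hj])]
    simp
  choose P hP using hposx
  set F : (Fin t → Bool) → List (Fin 2) := fun v =>
    List.ofFn (fun j : Fin n => xw tt (Sfun (W tt k) (yy tt k) (P v) + j)) with hF
  have hmem : ∀ v, F v ∈ {u : List (Fin 2) | u.length = n ∧ IsFactor (xw tt) u} := by
    intro v
    exact ⟨by simp [hF], _, occursAt_ofFn⟩
  have hkey : ∀ v v' : Fin t → Bool, ∀ i (hi : i < t),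
      (∀ j (hj : j < i), v ⟨j, by omega⟩ = v' ⟨j, by omega⟩) →
      v ⟨i, hi⟩ = true → v' ⟨i, hi⟩ = false → F v ≠ F v' := by
    intro v v' i hi hagr hvi hv'i hFF
    have hagr2 : ∀ j, j < i → yy tt k (P v + j) = yy tt k (P v' + j) := by
      intro j hj
      rw [hP v j (by omega), hP v' j (by omega), hagr j hj]
    obtain ⟨q, hq, h0, h1⟩ := down tt k (P v) (P v') i hagr2
      (by rw [hP v i hi]; exact hvi) (by rw [hP v' i hi]; exact hv'i)
    have hqn : q < n := by
      have h2 : (i + 1) * NN tt k ≤ t * NN tt k := Nat.mul_le_mul_right _ (by omega)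
      have h3 : t * NN tt k < (t + 1) * NN tt k := by
        have := NN_pos tt k
        have : t * NN tt k + NN tt k = (t+1) * NN tt k := by ring
        omega
      omega
    have := congrArg (fun u : List (Fin 2) => u.getD q 0) hFF
    simp only [hF] at this
    rw [List.getD_eq_getElem _ _ (by simpa using hqn),
      List.getD_eq_getElem _ _ (by simpa using hqn)] at this
    simp only [List.getElem_ofFn] at this
    rw [h0, h1] at this
    exact absurd this (by decide)
  have hinj : Function.Injective F := by
    intro v v' hvv
    by_contra hne
    have hD : ∃ j, ∃ hj : j < t, v ⟨j, hj⟩ ≠ v' ⟨j, hj⟩ := by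
      by_contra h
      push_neg at h
      exact hne (funext fun i => h i i.isLt)
    set i := Nat.find hD with hidef
    obtain ⟨hi, hneq⟩ := Nat.find_spec hD
    have hagr : ∀ j (hj : j < i), v ⟨j, by omega⟩ = v' ⟨j, by omega⟩ := by
      intro j hj
      have hmin := Nat.find_min hD hj
      push_neg at hmin
      exact hmin (by omega)
    cases hvi : v ⟨i, hi⟩ with
    | true =>
      have hv'i : v' ⟨i, hi⟩ = false := by
        cases h' : v' ⟨i, hi⟩
        · rfl
        · exact absurd (hvi.trans h'.symm) hneq
      exact hkey v v' i hi hagr hvi hv'i hvv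
    | false =>
      have hv'i : v' ⟨i, hi⟩ = true := by
        cases h' : v' ⟨i, hi⟩
        · exact absurd (hvi.trans h'.symm) hneq
        · rfl
      exact hkey v' v i hi (fun j hj => (hagr j hj).symm) hv'i hvi hvv.symm
  have hfin : {u : List (Fin 2) | u.length = n ∧ IsFactor (xw tt) u}.Finite :=
    Set.Finite.subset (List.finite_length_eq (Fin 2) n) (fun u hu => hu.1)
  calc (2 : ℕ) ^ t = (Set.univ : Set (Fin t → Bool)).ncard := by
        rw [Set.ncard_univ, Nat.card_eq_fintype_card, Fintype.card_fun]
        simp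
    _ = (F '' Set.univ).ncard := (Set.ncard_image_of_injective _ hinj).symm
    _ ≤ _ := Set.ncard_le_ncard (by rintro _ ⟨v, -, rfl⟩; exact hmem v) hfin

end QP

open QP

/-- for every positive function `f` converging to `0`, there is a multi-scale
quasiperiodic word `x` over `{0,1}` with `(1/n) log p_n(x) ≥ f(n)` for infinitely many `n`. -/
theorem exists_multiScaleQuasiperiodic_with_large_complexity
    (f : ℕ → ℝ) (hfpos : ∀ n, 0 < f n)
    (hf : Filter.Tendsto f Filter.atTop (nhds 0)) :
    ∃ x : ℕ → Fin 2, MultiScaleQuasiperiodic x ∧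
      ∃ᶠ n in Filter.atTop, f n ≤ Real.log (complexity x n) / n := by
  classical
  have log2pos : (0:ℝ) < Real.log 2 := Real.log_pos (by norm_num)
  have pick : ∀ N : ℕ, ∃ t : ℕ, 1 ≤ t ∧
      f ((t + 1) * N) * (((t + 1) * N : ℕ) : ℝ) ≤ t * Real.log 2 := by
    intro N
    rcases Nat.eq_zero_or_pos N with h0 | hNpos
    · refine ⟨1, le_rfl, ?_⟩
      subst h0
      simp only [Nat.mul_zero, Nat.cast_zero, mul_zero, Nat.cast_one, one_mul]
      exact le_of_lt log2pos
    · have hN1 : (1:ℝ) ≤ (N:ℝ) := by exact_mod_cast hNpos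
      set ε := Real.log 2 / (2 * (N:ℝ)) with hε
      have hεpos : 0 < ε := by positivity
      have hev : ∀ᶠ m in Filter.atTop, f m < ε :=
        Filter.Tendsto.eventually_lt_const hεpos hf
      obtain ⟨M, hM⟩ := Filter.eventually_atTop.mp hev
      refine ⟨max 1 M, le_max_left _ _, ?_⟩
      set t := max 1 M with ht
      have htM : M ≤ t := le_max_right _ _
      have ht1 : 1 ≤ t := le_max_left _ _
      have hn : M ≤ (t + 1) * N := by
        have h2 := Nat.mul_le_mul_left (t + 1) hNpos
        omega
      have hflt := hM _ hn
      have h1R : (1:ℝ) ≤ (t:ℝ) := by exact_mod_cast ht1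
      have hcast : (((t + 1) * N : ℕ) : ℝ) = ((t:ℝ) + 1) * (N:ℝ) := by push_cast; ring
      have hNne : (N:ℝ) ≠ 0 := by positivity
      calc f ((t + 1) * N) * (((t + 1) * N : ℕ) : ℝ)
          ≤ ε * (((t + 1) * N : ℕ) : ℝ) := by
            apply mul_le_mul_of_nonneg_right (le_of_lt hflt) (by positivity)
        _ = Real.log 2 * ((t:ℝ) + 1) / 2 := by
            rw [hcast, hε]; field_simp
        _ ≤ (t:ℝ) * Real.log 2 := by nlinarith [log2pos]
  set TN : ℕ → ℕ × ℕ := Nat.rec ((pick 6).choose, 6)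
    (fun _ prev => ((pick (2 * (seqA prev.1).length * prev.2)).choose,
      2 * (seqA prev.1).length * prev.2)) with hTN
  set tt : ℕ → ℕ := fun k => (TN k).1 with htt
  have hTNs : ∀ k, TN (k + 1) = ((pick (2 * (seqA (TN k).1).length * (TN k).2)).choose,
      2 * (seqA (TN k).1).length * (TN k).2) := fun k => rfl
  have hNN : ∀ k, (TN k).2 = NN tt k := by
    intro k
    induction k with
    | zero => rfl
    | succ k ih =>
      rw [hTNs k]
      show 2 * (seqA (TN k).1).length * (TN k).2 = NN tt (k + 1)
      rw [ih]
      rfl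
  have hspec : ∀ k, 1 ≤ tt k ∧
      f ((tt k + 1) * NN tt k) * ((((tt k + 1) * NN tt k : ℕ)) : ℝ) ≤ (tt k) * Real.log 2 := by
    intro k
    cases k with
    | zero =>
      have h := (pick 6).choose_spec
      have h6 : NN tt 0 = 6 := rfl
      rw [h6]
      exact h
    | succ k =>
      have h := (pick (2 * (seqA (TN k).1).length * (TN k).2)).choose_spec
      have h2 : NN tt (k + 1) = 2 * (seqA (TN k).1).length * (TN k).2 := by
        rw [show NN tt (k + 1) = 2 * (seqA (tt k)).length * NN tt k from rfl, ← hNN k]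
      rw [h2]
      exact h
  refine ⟨xw tt, multiscale tt, ?_⟩
  rw [Filter.frequently_atTop]
  intro N0
  set n := (tt N0 + 1) * NN tt N0 with hn
  have hNNpos := NN_pos tt N0
  refine ⟨n, ?_, ?_⟩
  · have h1 := NN_ge tt N0
    have h2 : NN tt N0 ≤ n := by
      rw [hn]
      exact Nat.le_mul_of_pos_left (NN tt N0) (by omega)
    omega
  · have hcl := complexity_lower tt N0
    have hnpos : 0 < n := by
      rw [hn]
      exact Nat.mul_pos (by omega) hNNpos
    have hnR : (0:ℝ) < (n:ℝ) := by exact_mod_cast hnpos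
    rw [le_div_iff₀ hnR]
    have hc2 : (2:ℝ) ^ (tt N0) ≤ (complexity (xw tt) n : ℝ) := by exact_mod_cast hcl
    have hlog : (tt N0 : ℝ) * Real.log 2 ≤ Real.log (complexity (xw tt) n) :=
      calc (tt N0 : ℝ) * Real.log 2 = Real.log (2 ^ (tt N0)) := (Real.log_pow _ _).symm
        _ ≤ _ := Real.log_le_log (by positivity) hc2
    exact le_trans (hspec N0).2 hlog
end

section
/- For every multi-scale quasiperiodic infinite word x, the sequence (1/n)·log(p_n(x)) converges to 0 as n → ∞; in other words, the topological entropy of the subshift generated by x is zero. -/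
open Filter MeasureTheory Topology

section Aux

variable {A : Type*}


lemma occursAt_ofFn (x : ℕ → A) (p n : ℕ) :
    OccursAt x (List.ofFn fun j : Fin n => x (p + j)) p := by
  intro k
  simp [List.get_ofFn]

lemma factors_finite [Finite A] (x : ℕ → A) (n : ℕ) :
    {u : List A | u.length = n ∧ IsFactor x u}.Finite :=
  (List.finite_length_eq A n).subset fun u hu => hu.1

lemma one_le_complexity [Finite A] (x : ℕ → A) (n : ℕ) : 1 ≤ complexity x n := by
  rw [complexity]
  have := (Set.ncard_pos (factors_finite x n)).mpr
    ⟨_, by simp [List.length_ofFn], ⟨0, occursAt_ofFn x 0 n⟩⟩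
  omega

lemma ncard_prod' {α β : Type*} (s : Set α) (t : Set β) :
    (s ×ˢ t).ncard = s.ncard * t.ncard := by
  rw [← Nat.card_coe_set_eq, ← Nat.card_coe_set_eq, ← Nat.card_coe_set_eq, ← Nat.card_prod]
  exact Nat.card_congr (Equiv.Set.prod s t)

lemma occursAt_getElem {x : ℕ → A} {u : List A} {p : ℕ} (h : OccursAt x u p)
    (j : ℕ) (hj : j < u.length) : x (p + j) = u[j] := by
  simpa [List.get_eq_getElem] using h ⟨j, hj⟩

lemma complexity_mono [Finite A] (x : ℕ → A) : Monotone (complexity x) := by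
  intro m n h
  have hsub : {u : List A | u.length = m ∧ IsFactor x u} ⊆
      List.take m '' {u : List A | u.length = n ∧ IsFactor x u} := by
    rintro u ⟨hlen, p, hocc⟩
    refine ⟨List.ofFn (fun j : Fin n => x (p + j)), ⟨by simp, p, occursAt_ofFn x p n⟩, ?_⟩
    apply List.ext_getElem
    · simp [hlen, h]
    intro j h1 h2
    have hj : j < m := by simpa [h, hlen] using h2
    rw [List.getElem_take, List.getElem_ofFn, ← occursAt_getElem hocc j (by omega)]
  exact le_trans (Set.ncard_le_ncard hsub ((factors_finite x n).image _))
    (Set.ncard_image_le (factors_finite x n))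

lemma complexity_submul [Finite A] (x : ℕ → A) (m n : ℕ) :
    complexity x (m + n) ≤ complexity x m * complexity x n := by
  have hsub : {u : List A | u.length = m + n ∧ IsFactor x u} ⊆
      (fun p : List A × List A => p.1 ++ p.2) ''
      ({u : List A | u.length = m ∧ IsFactor x u} ×ˢ {u : List A | u.length = n ∧ IsFactor x u}) := by
    rintro u ⟨hlen, p, hocc⟩
    refine ⟨(u.take m, u.drop m), ⟨⟨by simp [hlen], p, ?_⟩, ⟨by simp [hlen], p + m, ?_⟩⟩,
      by simp⟩
    · intro k
      have hk : (k : ℕ) < u.length := by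
        have := k.2; simp [hlen] at this ⊢; omega
      rw [List.get_eq_getElem, List.getElem_take, ← occursAt_getElem hocc k hk]
    · intro k
      have hk : m + (k : ℕ) < u.length := by
        have := k.2; simp [hlen] at this ⊢; omega
      rw [List.get_eq_getElem, List.getElem_drop, ← occursAt_getElem hocc _ hk,
        Nat.add_assoc]
  calc complexity x (m + n) ≤ _ :=
        Set.ncard_le_ncard hsub (((factors_finite x m).prod (factors_finite x n)).image _)
    _ ≤ _ := Set.ncard_image_le ((factors_finite x m).prod (factors_finite x n))
    _ = _ := ncard_prod' _ _

lemma complexity_quasiperiod [Finite A] {x : ℕ → A} {q : List A} (hq : IsQuasiperiod x q) :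
    complexity x q.length ≤ (q.length + 1) * (q.length + 1) := by
  obtain ⟨i, hmono, h0, hocc, hgap⟩ := hq
  set ℓ := q.length with hℓ
  have hsub : {u : List A | u.length = ℓ ∧ IsFactor x u} ⊆
      (fun p : ℕ × ℕ => ((q.take p.2).drop p.1 ++ q).take ℓ) ''
      ↑(Finset.range (ℓ + 1) ×ˢ Finset.range (ℓ + 1)) := by
    rintro u ⟨hlen, m, hoccu⟩
    set k := Nat.findGreatest (fun k => i k ≤ m) m with hk
    have hik : i k ≤ m :=
      Nat.findGreatest_spec (P := fun k => i k ≤ m) (Nat.zero_le m) (by simp [h0])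
    have hnext : ¬ i (k + 1) ≤ m := by
      intro hle
      exact Nat.findGreatest_is_greatest (Nat.lt_succ_self k)
        (le_trans (hmono.le_apply) hle) hle
    have hik1 : i k < i (k + 1) := hmono (Nat.lt_succ_self k)
    set r := m - i k with hr
    set g := i (k + 1) - i k with hg
    have hgl : g ≤ ℓ := hgap k
    have hrg : r < g := by omega
    refine ⟨(r, g), by simp; omega, ?_⟩
    show ((q.take g).drop r ++ q).take ℓ = u
    have hdl : ((q.take g).drop r).length = g - r := by simp; omega
    apply List.ext_getElem
    · simp only [List.length_take, List.length_append, List.length_drop, hlen,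
        List.length_take]
      omega
    intro j h1 h2
    have hjℓ : j < ℓ := by simpa [hlen] using h2
    rw [← occursAt_getElem hoccu j (by omega), List.getElem_take, List.getElem_append]
    by_cases hc : j < g - r
    · rw [dif_pos (by omega : j < ((q.take g).drop r).length)]
      rw [List.getElem_drop, List.getElem_take]
      have hmm : m + j = i k + (r + j) := by omega
      rw [hmm]
      exact (occursAt_getElem (hocc k) (r + j) (by omega)).symm
    · rw [dif_neg (by omega)]
      have hm : m + j = i (k + 1) + (j - ((q.take g).drop r).length) := by omega
      rw [hm]
      exact (occursAt_getElem (hocc (k + 1)) _ (by omega)).symm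
  calc complexity x ℓ ≤ _ :=
        Set.ncard_le_ncard hsub
          (((Finset.range (ℓ + 1) ×ˢ Finset.range (ℓ + 1)).finite_toSet).image _)
    _ ≤ _ := Set.ncard_image_le (Finset.range (ℓ + 1) ×ˢ Finset.range (ℓ + 1)).finite_toSet
    _ = _ := by rw [Set.ncard_coe_finset, Finset.card_product, Finset.card_range]

lemma complexity_zero_le [Finite A] (x : ℕ → A) : complexity x 0 ≤ 1 := by
  have : {u : List A | u.length = 0 ∧ IsFactor x u} ⊆ {[]} := by
    rintro u ⟨hu, -⟩
    simp [List.length_eq_zero_iff] at hu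
    simp [hu]
  calc complexity x 0 ≤ ({[]} : Set (List A)).ncard :=
        Set.ncard_le_ncard this (Set.finite_singleton _)
    _ = 1 := Set.ncard_singleton _

lemma complexity_le_pow [Finite A] {x : ℕ → A} {q : List A} (hq : IsQuasiperiod x q)
    (hℓ : 1 ≤ q.length) (n : ℕ) :
    complexity x n ≤ ((q.length + 1) * (q.length + 1)) ^ (n / q.length + 1) := by
  set ℓ := q.length
  have hpow : ∀ k, complexity x (k * ℓ) ≤ ((ℓ + 1) * (ℓ + 1)) ^ k := by
    intro k
    induction k with
    | zero => simpa using complexity_zero_le x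
    | succ k ih =>
        calc complexity x ((k + 1) * ℓ) = complexity x (k * ℓ + ℓ) := by ring_nf
          _ ≤ complexity x (k * ℓ) * complexity x ℓ := complexity_submul x _ _
          _ ≤ ((ℓ + 1) * (ℓ + 1)) ^ k * ((ℓ + 1) * (ℓ + 1)) :=
              Nat.mul_le_mul ih (complexity_quasiperiod hq)
          _ = ((ℓ + 1) * (ℓ + 1)) ^ (k + 1) := (pow_succ _ _).symm
  calc complexity x n ≤ complexity x ((n / ℓ + 1) * ℓ) := by
        apply complexity_mono
        have h1 := Nat.div_add_mod n ℓ
        have h2 := Nat.mod_lt n (show 0 < ℓ by omega)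
        nlinarith
    _ ≤ _ := hpow _

lemma exists_long_quasiperiod [Finite A] {x : ℕ → A}
    (h : {q : List A | IsQuasiperiod x q}.Infinite) (L : ℕ) :
    ∃ q, IsQuasiperiod x q ∧ L ≤ q.length := by
  by_contra hc
  push_neg at hc
  exact h ((List.finite_length_lt A L).subset fun q hq => hc q hq)

lemma tendsto_aux : Tendsto (fun L : ℕ => 2 * Real.log (L + 1) / L) atTop (nhds 0) := by
  have h1 : Tendsto (fun y : ℝ => Real.log y / y) atTop (nhds 0) :=
    Real.isLittleO_log_id_atTop.tendsto_div_nhds_zero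
  have h2 : Tendsto (fun L : ℕ => ((L : ℝ) + 1)) atTop atTop :=
    tendsto_atTop_add_const_right _ 1 tendsto_natCast_atTop_atTop
  have h3 : Tendsto (fun L : ℕ => 4 * (Real.log ((L : ℝ) + 1) / ((L : ℝ) + 1)))
      atTop (nhds 0) := by
    simpa using (h1.comp h2).const_mul 4
  apply squeeze_zero' ?_ ?_ h3
  · filter_upwards [eventually_ge_atTop 1] with L hL
    have : (0:ℝ) < L := by exact_mod_cast hL
    have hlog : 0 ≤ Real.log ((L : ℝ) + 1) := Real.log_nonneg (by linarith)
    positivity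
  · filter_upwards [eventually_ge_atTop 1] with L hL
    have hL' : (1:ℝ) ≤ L := by exact_mod_cast hL
    have hlog : 0 ≤ Real.log ((L : ℝ) + 1) := Real.log_nonneg (by linarith)
    rw [div_le_iff₀ (by linarith), mul_comm 4, mul_assoc, div_mul_eq_mul_div,
      le_div_iff₀ (by linarith)]
    nlinarith

theorem main_thm [Finite A] (x : ℕ → A) (h : {q : List A | IsQuasiperiod x q}.Infinite) :
    Tendsto (fun n : ℕ => Real.log (complexity x n) / n) atTop (nhds 0) := by
  rw [Metric.tendsto_atTop]
  intro ε hε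
  obtain ⟨L0, hL0⟩ := eventually_atTop.mp (tendsto_aux.eventually (Iio_mem_nhds (half_pos hε)))
  obtain ⟨q, hq, hqlen⟩ := exists_long_quasiperiod h (max L0 1)
  set ℓ := q.length with hℓdef
  have hℓ1 : 1 ≤ ℓ := le_trans (le_max_right _ _) hqlen
  have hℓpos : (0:ℝ) < ℓ := by exact_mod_cast hℓ1
  set C := Real.log ((ℓ : ℝ) + 1) with hC
  have hCpos : 0 ≤ C := Real.log_nonneg (by linarith)
  have hb1 : 2 * C / ℓ < ε / 2 := hL0 ℓ (le_trans (le_max_left _ _) hqlen)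
  obtain ⟨N0, hN0⟩ := eventually_atTop.mp
    ((tendsto_const_div_atTop_nhds_zero_nat (2 * C)).eventually (Iio_mem_nhds (half_pos hε)))
  refine ⟨max N0 1, fun n hn => ?_⟩
  have hn1 : 1 ≤ n := le_trans (le_max_right _ _) hn
  have hnpos : (0:ℝ) < n := by exact_mod_cast hn1
  have hb2 : 2 * C / n < ε / 2 := hN0 n (le_trans (le_max_left _ _) hn)
  have hpos : (0:ℝ) < (complexity x n : ℝ) := by
    exact_mod_cast one_le_complexity x n
  set k := n / ℓ + 1 with hkdef
  have h1 : Real.log (complexity x n) ≤ (k : ℝ) * (2 * C) := by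
    have hle : (complexity x n : ℝ) ≤ (((ℓ:ℝ) + 1) * ((ℓ:ℝ) + 1)) ^ k := by
      exact_mod_cast complexity_le_pow hq hℓ1 n
    have := Real.log_le_log hpos hle
    rw [Real.log_pow, Real.log_mul (by linarith) (by linarith)] at this
    rw [hC]
    linarith
  have hk : (k : ℝ) ≤ (n : ℝ) / ℓ + 1 := by
    have := Nat.cast_div_le (m := n) (n := ℓ) (α := ℝ)
    rw [hkdef]
    push_cast
    linarith
  have h2 : (k : ℝ) * (2 * C) ≤ ((n : ℝ) / ℓ + 1) * (2 * C) :=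
    mul_le_mul_of_nonneg_right hk (by positivity)
  have h3 : Real.log (complexity x n) / n ≤ ((n : ℝ) / ℓ + 1) * (2 * C) / n := by
    gcongr
    linarith
  have h4 : ((n : ℝ) / ℓ + 1) * (2 * C) / n = 2 * C / ℓ + 2 * C / n := by
    field_simp
  have hnonneg : 0 ≤ Real.log (complexity x n) / n :=
    div_nonneg (Real.log_nonneg (by exact_mod_cast one_le_complexity x n)) hnpos.le
  rw [Real.dist_eq, sub_zero, abs_of_nonneg hnonneg]
  calc Real.log (complexity x n) / n ≤ 2 * C / ℓ + 2 * C / n := by rw [← h4]; exact h3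
    _ < ε / 2 + ε / 2 := by linarith
    _ = ε := by ring

end Aux

/-- a multi-scale quasiperiodic word has zero topological entropy:
`(1/n) log p_n(x) → 0`. -/
theorem multiScaleQuasiperiodic_zero_entropy {A : Type*} [Finite A]
    (x : ℕ → A) (h : MultiScaleQuasiperiodic x) :
    Filter.Tendsto (fun n : ℕ => Real.log (complexity x n) / n) Filter.atTop (nhds 0) :=
  main_thm x h
end

section
/- Let x be a multi-scale quasiperiodic infinite word over a finite alphabet A, let X be the closure of the orbit {S^k(x) : k ∈ ℕ} of x under the shift map S in A^ℕ (with the product of discrete topologies), and let S also denote the restriction of the shift to X. Then (X, S) is a minimal dynamical system: X is a nonempty closed S-invariant subset of A^ℕ having no proper nonempty closed S-invariant subset. -/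
open Filter MeasureTheory Topology

lemma mem_closure_pi_iff {A : Type*} [TopologicalSpace A] [DiscreteTopology A]
    {S : Set (ℕ → A)} {y : ℕ → A} :
    y ∈ closure S ↔ ∀ n : ℕ, ∃ z ∈ S, ∀ i < n, z i = y i := by
  constructor
  · intro hy n
    have hU : IsOpen {z : ℕ → A | ∀ i < n, z i = y i} := by
      have : {z : ℕ → A | ∀ i < n, z i = y i} =
          ⋂ i ∈ Finset.range n, (fun z : ℕ → A => z i) ⁻¹' {y i} := by
        ext z; simp
      rw [this]
      exact isOpen_biInter_finset fun i _ =>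
        (continuous_apply i).isOpen_preimage _ (isOpen_discrete _)
    obtain ⟨z, hz1, hz2⟩ := (mem_closure_iff.mp hy) _ hU (fun i _ => rfl)
    exact ⟨z, hz2, hz1⟩
  · intro h
    rw [mem_closure_iff]
    intro U hU hyU
    obtain ⟨I, u, hu, hsub⟩ := isOpen_pi_iff.mp hU y hyU
    obtain ⟨z, hzS, hz⟩ := h ((I.sup id) + 1)
    refine ⟨z, hsub fun i hi => ?_, hzS⟩
    rw [hz i (Nat.lt_succ_of_le (Finset.le_sup (f := id) hi))]
    exact (hu i hi).2

lemma unif_rec {A : Type*} [Finite A] (x : ℕ → A) (h : MultiScaleQuasiperiodic x) (n : ℕ) :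
    ∃ L, ∀ p, ∃ j, p ≤ j ∧ j + n ≤ p + L ∧ ∀ i' < n, x (j + i') = x i' := by
  obtain ⟨q, hq, hlen⟩ : ∃ q, IsQuasiperiod x q ∧ n ≤ q.length := by
    by_contra hc
    push_neg at hc
    exact h ((List.finite_length_lt A n).subset fun q hq => hc q hq)
  obtain ⟨i, hmono, hi0, hocc, hgap⟩ := hq
  refine ⟨q.length + n, fun p => ?_⟩
  have hex : ∃ N, p < i N := ⟨p + 1, lt_of_lt_of_le (Nat.lt_succ_self p) hmono.le_apply⟩
  set N := Nat.find hex with hN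
  have hNpos : N ≠ 0 := by
    intro h0
    have := Nat.find_spec hex
    rw [← hN, h0, hi0] at this
    omega
  obtain ⟨M, hM⟩ := Nat.exists_eq_succ_of_ne_zero hNpos
  have hMle : ¬ p < i M := Nat.find_min hex (by omega)
  have hjub : i N ≤ i M + q.length := by
    have := hgap M
    have hle : i M ≤ i (M + 1) := (hmono.le_iff_le).mpr (by omega)
    rw [hM, Nat.succ_eq_add_one]; omega
  refine ⟨i N, le_of_lt (Nat.find_spec hex), by omega, fun i' hi' => ?_⟩
  have h1 := hocc N ⟨i', lt_of_lt_of_le hi' hlen⟩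
  have h2 := hocc 0 ⟨i', lt_of_lt_of_le hi' hlen⟩
  rw [hi0, Nat.zero_add] at h2
  simpa [h2] using h1

/-- the orbit closure of a multi-scale quasiperiodic word under the shift
is a minimal subshift. -/
theorem multiScaleQuasiperiodic_orbit_closure_minimal {A : Type*} [Finite A]
    [TopologicalSpace A] [DiscreteTopology A]
    (x : ℕ → A) (h : MultiScaleQuasiperiodic x) :
    (closure (Set.range fun k : ℕ => fun n : ℕ => x (n + k))).Nonempty ∧
    IsClosed (closure (Set.range fun k : ℕ => fun n : ℕ => x (n + k))) ∧
    (fun y : ℕ → A => fun n => y (n + 1)) ''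
        closure (Set.range fun k : ℕ => fun n : ℕ => x (n + k)) ⊆
      closure (Set.range fun k : ℕ => fun n : ℕ => x (n + k)) ∧
    ∀ Y : Set (ℕ → A), Y ⊆ closure (Set.range fun k : ℕ => fun n : ℕ => x (n + k)) →
      Y.Nonempty → IsClosed Y → (fun y : ℕ → A => fun n => y (n + 1)) '' Y ⊆ Y →
      Y = closure (Set.range fun k : ℕ => fun n : ℕ => x (n + k)) := by
  classical
  set f : ℕ → (ℕ → A) := fun k => fun n => x (n + k) with hf
  set T : (ℕ → A) → (ℕ → A) := fun y => fun n => y (n + 1) with hT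
  have hTcont : Continuous T := continuous_pi fun n => continuous_apply (n + 1)
  have hTf : ∀ k, T (f k) = f (k + 1) := by
    intro k; funext n; show x (n + 1 + k) = x (n + (k + 1)); congr 1; omega
  have hf0 : f 0 = x := by funext n; show x (n + 0) = x n; rw [Nat.add_zero]
  refine ⟨⟨f 0, subset_closure ⟨0, rfl⟩⟩, isClosed_closure, ?_, ?_⟩
  · calc T '' closure (Set.range f) ⊆ closure (T '' Set.range f) :=
          image_closure_subset_closure_image hTcont
      _ ⊆ closure (Set.range f) := by
          apply closure_mono
          rintro _ ⟨_, ⟨k, rfl⟩, rfl⟩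
          exact ⟨k + 1, (hTf k).symm⟩
  · intro Y hYsub hYne hYcl hYinv
    obtain ⟨y, hy⟩ := hYne
    have horb : ∀ k, (fun n => y (n + k)) ∈ Y := by
      intro k
      induction k with
      | zero =>
        have : (fun n => y (n + 0)) = y := by funext n; rw [Nat.add_zero]
        rw [this]; exact hy
      | succ k ih =>
        have h1 : T (fun n => y (n + k)) ∈ Y := hYinv ⟨_, ih, rfl⟩
        have h2 : T (fun n => y (n + k)) = fun n => y (n + (k + 1)) := by
          funext n; show y (n + 1 + k) = y (n + (k + 1)); congr 1; omega
        rwa [h2] at h1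
    have hx_cl : x ∈ closure (Set.range fun k : ℕ => fun n : ℕ => y (n + k)) := by
      rw [mem_closure_pi_iff]
      intro n
      obtain ⟨L, hL⟩ := unif_rec x h n
      have hyX : y ∈ closure (Set.range f) := hYsub hy
      obtain ⟨z, ⟨m, rfl⟩, hz⟩ := mem_closure_pi_iff.mp hyX (L + n)
      obtain ⟨j, hj1, hj2, hj3⟩ := hL m
      refine ⟨fun n' => y (n' + (j - m)), ⟨j - m, rfl⟩, fun i hi => ?_⟩
      have h1 : i + (j - m) < L + n := by omega
      have h2 := hz (i + (j - m)) h1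
      show y (i + (j - m)) = x i
      have h3 : f m (i + (j - m)) = x (j + i) := by
        show x (i + (j - m) + m) = x (j + i); congr 1; omega
      rw [h3] at h2
      rw [← h2]
      exact hj3 i hi
    have hxY : x ∈ Y := by
      have hsub2 : closure (Set.range fun k : ℕ => fun n : ℕ => y (n + k)) ⊆ Y := by
        rw [← hYcl.closure_eq]
        exact closure_mono (Set.range_subset_iff.mpr horb)
      exact hsub2 hx_cl
    have hfY : ∀ k, f k ∈ Y := by
      intro k
      induction k with
      | zero => rw [hf0]; exact hxY
      | succ k ih => rw [← hTf k]; exact hYinv ⟨_, ih, rfl⟩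
    refine Set.Subset.antisymm hYsub ?_
    rw [← hYcl.closure_eq]
    exact closure_mono (Set.range_subset_iff.mpr hfY)
end

section
/- Let x be a multi-scale quasiperiodic infinite word over a finite alphabet A. Then every finite word u occurring in x has a frequency in x: the sequence (1/n)·#(u, x_0x_1…x_{n−1}) converges as n → ∞, where #(u, v) denotes the number of occurrences of u in the finite word v. -/
open Filter MeasureTheory Topology

section Freq

attribute [local instance 10] Classical.propDecidable

variable {A : Type*}

noncomputable def cnt (x : ℕ → A) (u : List A) (n : ℕ) : ℕ :=
  ((Finset.range n).filter (fun i => OccursAt x u i)).card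

lemma cnt_mono (x : ℕ → A) (u : List A) : Monotone (cnt x u) := fun _ _ h =>
  Finset.card_le_card (Finset.filter_subset_filter _ (Finset.range_subset_range.2 h))

lemma cnt_le (x : ℕ → A) (u : List A) (n : ℕ) : cnt x u n ≤ n := by
  have := Finset.card_filter_le (Finset.range n) (fun i => OccursAt x u i)
  simpa [cnt] using this

lemma cnt_add_split (x : ℕ → A) (u : List A) (m t : ℕ) :
    cnt x u (m + t)
      = cnt x u m + ((Finset.Ico m (m + t)).filter (fun i => OccursAt x u i)).card := by
  unfold cnt
  rw [Finset.range_eq_Ico, ← Finset.Ico_union_Ico_eq_Ico (Nat.zero_le m) (Nat.le_add_right m t),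
    Finset.filter_union, Finset.card_union_of_disjoint, ← Finset.range_eq_Ico]
  exact Finset.disjoint_filter_filter (Finset.Ico_disjoint_Ico_consecutive 0 m (m + t))

lemma cnt_add_le (x : ℕ → A) (u : List A) (m t : ℕ) :
    cnt x u (m + t) ≤ cnt x u m + t := by
  rw [cnt_add_split]
  have h1 := Finset.card_filter_le (Finset.Ico m (m + t)) (fun i => OccursAt x u i)
  have h2 : (Finset.Ico m (m + t)).card = t := by rw [Nat.card_Ico]; omega
  omega

lemma card_Ico_filter_shift (x : ℕ → A) (u : List A) (s g : ℕ) :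
    ((Finset.Ico s (s + g)).filter (fun i => OccursAt x u i)).card
      = ((Finset.range g).filter (fun t => OccursAt x u (s + t))).card := by
  apply Finset.card_bij' (fun a _ => a - s) (fun a _ => s + a)
  · intro a ha
    simp only [Finset.mem_filter, Finset.mem_Ico] at ha
    simp only [Finset.mem_filter, Finset.mem_range]
    constructor
    · omega
    · have : s + (a - s) = a := by omega
      rw [this]; exact ha.2
  · intro a ha
    simp only [Finset.mem_filter, Finset.mem_range] at ha
    simp only [Finset.mem_filter, Finset.mem_Ico]
    exact ⟨⟨by omega, by omega⟩, ha.2⟩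
  · intro a ha
    simp only [Finset.mem_filter, Finset.mem_Ico] at ha
    omega
  · intro a _; omega

lemma card_filter_compare {g M bad : ℕ} (P P' : ℕ → Prop)
    (hagree : ∀ t, t < g → t < M → (P t ↔ P' t))
    (hbad : g ≤ M + bad) :
    ((Finset.range g).filter P).card ≤ ((Finset.range g).filter P').card + bad := by
  classical
  have hsub : (Finset.range g).filter P
      ⊆ ((Finset.range g).filter P') ∪ (Finset.Ico M g) := by
    intro t ht
    simp only [Finset.mem_filter, Finset.mem_range] at ht
    by_cases hM : t < M
    · exact Finset.mem_union_left _ (by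
        simp only [Finset.mem_filter, Finset.mem_range]
        exact ⟨ht.1, (hagree t ht.1 hM).1 ht.2⟩)
    · exact Finset.mem_union_right _ (by simp only [Finset.mem_Ico]; omega)
  calc ((Finset.range g).filter P).card
      ≤ (((Finset.range g).filter P') ∪ (Finset.Ico M g)).card := Finset.card_le_card hsub
    _ ≤ ((Finset.range g).filter P').card + (Finset.Ico M g).card := Finset.card_union_le _ _
    _ ≤ ((Finset.range g).filter P').card + bad := by rw [Nat.card_Ico]; omega

lemma occ_shift_iff (x : ℕ → A) (u Q : List A) {s t : ℕ}
    (hQ0 : OccursAt x Q 0) (hQs : OccursAt x Q s) (h : t + u.length ≤ Q.length) :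
    OccursAt x u (s + t) ↔ OccursAt x u t := by
  have hx : ∀ k : Fin u.length, x (s + t + (k : ℕ)) = x (t + (k : ℕ)) := by
    intro k
    have hk : t + (k : ℕ) < Q.length := by have := k.isLt; omega
    have h1 := hQs ⟨t + (k : ℕ), hk⟩
    have h2 := hQ0 ⟨t + (k : ℕ), hk⟩
    simp only at h1 h2
    have h2' : x (t + (k : ℕ)) = Q.get ⟨t + (k : ℕ), hk⟩ := by
      simpa using h2
    rw [show s + t + (k : ℕ) = s + (t + (k : ℕ)) by omega, h1, h2']
  constructor
  · intro ho k; rw [← hx k]; exact ho k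
  · intro ho k; rw [hx k]; exact ho k

/-- counts over a block starting at an occurrence of `Q` agree with prefix counts,
up to `u.length`. -/
lemma block_count_bounds (x : ℕ → A) (u Q : List A) {s g : ℕ}
    (hQ0 : OccursAt x Q 0) (hQs : OccursAt x Q s) (hg : g ≤ Q.length) (hL : 1 ≤ u.length) :
    ((Finset.Ico s (s + g)).filter (fun i => OccursAt x u i)).card ≤ cnt x u g + u.length ∧
    cnt x u g ≤ ((Finset.Ico s (s + g)).filter (fun i => OccursAt x u i)).card + u.length := by
  rw [card_Ico_filter_shift]
  have hagree : ∀ t, t < g → t < Q.length + 1 - u.length →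
      (OccursAt x u (s + t) ↔ OccursAt x u t) := by
    intro t _ ht2
    exact occ_shift_iff x u Q hQ0 hQs (by omega)
  have hbad : g ≤ (Q.length + 1 - u.length) + u.length := by omega
  constructor
  · exact card_filter_compare _ _ hagree hbad
  · exact card_filter_compare _ _ (fun t h1 h2 => (hagree t h1 h2).symm) hbad

/-- additivity of counts along a "period" `p`. -/
lemma cnt_period_add (x : ℕ → A) (u : List A) {p s N : ℕ}
    (hper : ∀ i, i + p + u.length ≤ N → (OccursAt x u (p + i) ↔ OccursAt x u i))
    (h : p + s + u.length ≤ N) :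
    cnt x u (p + s) = cnt x u p + cnt x u s := by
  rw [cnt_add_split, card_Ico_filter_shift]
  congr 1
  apply Finset.card_bij' (fun a _ => a) (fun a _ => a)
  · intro a ha
    simp only [Finset.mem_filter, Finset.mem_range] at ha ⊢
    exact ⟨ha.1, (hper a (by omega)).1 ha.2⟩
  · intro a ha
    simp only [Finset.mem_filter, Finset.mem_range] at ha ⊢
    exact ⟨ha.1, (hper a (by omega)).2 ha.2⟩
  · intro a _; rfl
  · intro a _; rfl

lemma cnt_descent (x : ℕ → A) (u : List A) {p N : ℕ}
    (hper : ∀ i, i + p + u.length ≤ N → (OccursAt x u (p + i) ↔ OccursAt x u i)) :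
    ∀ k r, k * p + r + u.length ≤ N → cnt x u (k * p + r) = k * cnt x u p + cnt x u r := by
  intro k
  induction k with
  | zero => intro r _; simp
  | succ k ih =>
    intro r h
    have h1 : (k + 1) * p + r = p + (k * p + r) := by ring
    rw [h1, cnt_period_add x u hper (by omega), ih r (by omega)]
    ring


lemma qp_occ0 {x : ℕ → A} {Q : List A} (hq : IsQuasiperiod x Q) : OccursAt x Q 0 := by
  obtain ⟨i, _, h0, hocc, _⟩ := hq
  have := hocc 0
  rwa [h0] at this

lemma qp_exists_next {x : ℕ → A} {Q : List A} (hq : IsQuasiperiod x Q) (s : ℕ) :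
    ∃ t, s < t ∧ t ≤ s + Q.length ∧ OccursAt x Q t := by
  obtain ⟨i, hmono, h0, hocc, hgap⟩ := hq
  set k := Nat.findGreatest (fun k => i k ≤ s) s with hk
  have hks : i k ≤ s := by
    have h00 : (fun k => i k ≤ s) 0 := by simpa [h0] using Nat.zero_le s
    exact Nat.findGreatest_spec (P := fun k => i k ≤ s) (Nat.zero_le s) h00
  have hnext : s < i (k + 1) := by
    by_contra hc
    push_neg at hc
    have hle : k + 1 ≤ s := le_trans (hmono.le_apply) hc
    exact (Nat.findGreatest_is_greatest (lt_add_one k) hle) hc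
  refine ⟨i (k + 1), hnext, ?_, hocc (k + 1)⟩
  have h1 := hgap k
  have h2 : i k ≤ i (k + 1) := (hmono (lt_add_one k)).le
  omega

/-- greedy sequence of occurrences of `Q`: next term is the largest occurrence position
within distance `|Q|`. -/
noncomputable def gj (x : ℕ → A) (Q : List A) : ℕ → ℕ :=
  fun m => Nat.rec 0 (fun _ prev => Nat.findGreatest (OccursAt x Q) (prev + Q.length)) m

lemma gj_zero (x : ℕ → A) (Q : List A) : gj x Q 0 = 0 := rfl

lemma gj_succ (x : ℕ → A) (Q : List A) (m : ℕ) :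
    gj x Q (m + 1) = Nat.findGreatest (OccursAt x Q) (gj x Q m + Q.length) := rfl

lemma gj_occ {x : ℕ → A} {Q : List A} (hq : IsQuasiperiod x Q) (m : ℕ) :
    OccursAt x Q (gj x Q m) := by
  cases m with
  | zero => exact qp_occ0 hq
  | succ m =>
    obtain ⟨t, _, ht2, ht3⟩ := qp_exists_next hq (gj x Q m)
    rw [gj_succ]
    exact Nat.findGreatest_spec ht2 ht3

lemma gj_lt_succ {x : ℕ → A} {Q : List A} (hq : IsQuasiperiod x Q) (m : ℕ) :
    gj x Q m < gj x Q (m + 1) := by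
  obtain ⟨t, ht1, ht2, ht3⟩ := qp_exists_next hq (gj x Q m)
  have := Nat.le_findGreatest ht2 ht3
  rw [gj_succ]
  omega

lemma gj_succ_le {x : ℕ → A} (Q : List A) (m : ℕ) :
    gj x Q (m + 1) ≤ gj x Q m + Q.length := by
  rw [gj_succ]
  exact Nat.findGreatest_le _

lemma gj_sparse {x : ℕ → A} {Q : List A} (hq : IsQuasiperiod x Q) (m : ℕ) :
    gj x Q m + Q.length < gj x Q (m + 2) := by
  by_contra hc
  push_neg at hc
  have h1 : gj x Q (m + 1) < gj x Q (m + 2) := gj_lt_succ hq (m + 1)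
  have h2 : OccursAt x Q (gj x Q (m + 2)) := gj_occ hq (m + 2)
  have := Nat.findGreatest_is_greatest (P := OccursAt x Q)
    (n := gj x Q m + Q.length) (by rw [← gj_succ]; exact h1) hc
  exact this h2

lemma gj_ge {x : ℕ → A} {Q : List A} (hq : IsQuasiperiod x Q) (m : ℕ) : m ≤ gj x Q m := by
  induction m with
  | zero => omega
  | succ m ih => have := gj_lt_succ hq m; omega

lemma gj_sum {x : ℕ → A} {Q : List A} (hq : IsQuasiperiod x Q) (m : ℕ) :
    ∑ t ∈ Finset.range m, (gj x Q (t + 1) - gj x Q t) = gj x Q m := by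
  induction m with
  | zero => simp [gj_zero]
  | succ m ih =>
    rw [Finset.sum_range_succ, ih]
    have := gj_lt_succ hq m
    omega

lemma gj_two_mul {x : ℕ → A} {Q : List A} (hq : IsQuasiperiod x Q) (t : ℕ) :
    t * (Q.length + 1) ≤ gj x Q (2 * t) := by
  induction t with
  | zero => omega
  | succ t ih =>
    have h1 : gj x Q (2 * t) + Q.length < gj x Q (2 * t + 2) := gj_sparse hq (2 * t)
    have h2 : 2 * (t + 1) = 2 * t + 2 := by ring
    rw [h2]
    nlinarith

lemma blocks_sum_bounds {x : ℕ → A} {u Q : List A} (hq : IsQuasiperiod x Q)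
    (hL : 1 ≤ u.length) (k : ℕ) :
    cnt x u (gj x Q k) ≤ (∑ t ∈ Finset.range k, cnt x u (gj x Q (t + 1) - gj x Q t))
        + u.length * k ∧
    (∑ t ∈ Finset.range k, cnt x u (gj x Q (t + 1) - gj x Q t))
        ≤ cnt x u (gj x Q k) + u.length * k := by
  induction k with
  | zero => simp [gj_zero, cnt]
  | succ k ih =>
    have hlt := gj_lt_succ hq k
    have hle := gj_succ_le (x := x) Q k
    set g := gj x Q (k + 1) - gj x Q k with hg
    have hsplit : gj x Q (k + 1) = gj x Q k + g := by omega
    have hgle : g ≤ Q.length := by omega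
    have hb := block_count_bounds x u Q (qp_occ0 hq) (gj_occ hq k) hgle hL
    have hC : cnt x u (gj x Q (k + 1))
        = cnt x u (gj x Q k)
          + ((Finset.Ico (gj x Q k) (gj x Q k + g)).filter (fun i => OccursAt x u i)).card := by
      rw [hsplit]; exact cnt_add_split x u _ _
    have hmul : u.length * (k + 1) = u.length * k + u.length := by ring
    rw [Finset.sum_range_succ, hC, ← hg]
    omega


lemma gj_mono {x : ℕ → A} {Q : List A} (hq : IsQuasiperiod x Q) : Monotone (gj x Q) :=
  monotone_nat_of_le_succ (fun m => (gj_lt_succ hq m).le)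

set_option maxHeartbeats 2000000 in
lemma key (x : ℕ → A) (u Q : List A) (hL : 1 ≤ u.length) (hq : IsQuasiperiod x Q)
    (a b ε : ℝ) (M₀ : ℕ) (hM₀ : 1 ≤ M₀)
    (hε : 0 < ε) (hε1 : ε ≤ 1/100) (ha0 : 0 ≤ a) (hab : a ≤ b) (hb1 : b ≤ 1)
    (hN : (100 : ℝ) * ((M₀ : ℝ) + u.length + 1) ≤ ε ^ 2 * Q.length)
    (hlow : ∀ n : ℕ, M₀ ≤ n → (a - ε) * n ≤ (cnt x u n : ℝ))
    (hhigh : ∀ n : ℕ, M₀ ≤ n → (cnt x u n : ℝ) ≤ (b + ε) * n)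
    (hfa : ∀ C : ℕ, ∃ n : ℕ, C ≤ n ∧ (cnt x u n : ℝ) ≤ (a + ε) * n)
    (hfb : ∀ C : ℕ, ∃ n : ℕ, C ≤ n ∧ (b - ε) * n ≤ (cnt x u n : ℝ)) :
    b ≤ a + 200 * ε := by
  set N := Q.length with hNdef
  set L := u.length with hLdef
  set E : ℝ := (M₀ : ℝ) + L with hEdef
  have hM₀R : (1:ℝ) ≤ (M₀:ℝ) := by exact_mod_cast hM₀
  have hLR : (1:ℝ) ≤ (L:ℝ) := by exact_mod_cast hL
  have hE1 : (2 : ℝ) ≤ E := by rw [hEdef]; linarith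
  have hE0 : (0 : ℝ) < E := by linarith
  have hNR : (200 : ℝ) ≤ (N : ℝ) := by nlinarith [sq_nonneg ε]
  have hN1 : 1 ≤ N := by exact_mod_cast le_trans (by norm_num : (1:ℝ) ≤ 200) hNR
  -- the set of realized large gaps
  set Gset : Set ℕ := {v | (∃ t, gj x Q (t + 1) - gj x Q t = v) ∧ E ≤ ε * (v : ℝ)}
    with hGdef
  have hgapN : ∀ t, gj x Q (t + 1) - gj x Q t ≤ N := by
    intro t
    have h1 := gj_succ_le (x := x) Q t
    omega
  have hGne : Gset.Nonempty := by
    have hj2 : N + 1 ≤ gj x Q 2 := by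
      have h := gj_sparse hq 0
      rw [gj_zero] at h
      norm_num at h
      omega
    have hsum : N + 1 ≤ (gj x Q 1 - gj x Q 0) + (gj x Q 2 - gj x Q 1) := by
      have h01 := gj_lt_succ hq 0
      have h12 := gj_lt_succ hq 1
      rw [gj_zero] at *
      omega
    have hlarge : ∀ v : ℕ, N + 1 ≤ 2 * v → E ≤ ε * (v : ℝ) := by
      intro v hv
      have hvR : (N : ℝ) + 1 ≤ 2 * v := by exact_mod_cast hv
      nlinarith
    rcases le_total (gj x Q 1 - gj x Q 0) (gj x Q 2 - gj x Q 1) with hc | hc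
    · exact ⟨gj x Q 2 - gj x Q 1, ⟨1, rfl⟩, hlarge _ (by omega)⟩
    · exact ⟨gj x Q 1 - gj x Q 0, ⟨0, rfl⟩, hlarge _ (by omega)⟩
  set p := sInf Gset with hpdef
  obtain ⟨⟨t0, ht0⟩, hpE⟩ := Nat.sInf_mem hGne
  rw [← hpdef] at hpE ht0
  have hpN : p ≤ N := by rw [← ht0]; exact hgapN t0
  have hpR : E ≤ ε * (p : ℝ) := hpE
  have hpML : (M₀ : ℝ) + L ≤ (p : ℝ) := by nlinarith
  have hppos : 0 < p := by
    rcases Nat.eq_zero_or_pos p with h0 | h0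
    · exfalso; rw [h0] at hpR; push_cast at hpR; nlinarith
    · exact h0
  have hpnat : M₀ + L ≤ p := by exact_mod_cast (by push_cast; exact hpML : ((M₀ + L : ℕ) : ℝ) ≤ (p:ℝ))
  -- p-additivity of occurrences
  have hper : ∀ i, i + p + L ≤ N → (OccursAt x u (p + i) ↔ OccursAt x u i) := by
    intro i hi
    have hjlt := gj_lt_succ hq t0
    have h1 : OccursAt x u (gj x Q t0 + (p + i)) ↔ OccursAt x u (p + i) :=
      occ_shift_iff x u Q (qp_occ0 hq) (gj_occ hq t0) (by omega)
    have h2 : OccursAt x u (gj x Q (t0 + 1) + i) ↔ OccursAt x u i :=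
      occ_shift_iff x u Q (qp_occ0 hq) (gj_occ hq (t0 + 1)) (by omega)
    have heq : gj x Q t0 + (p + i) = gj x Q (t0 + 1) + i := by omega
    rw [← h2, ← heq, h1]
  -- counting descent along p
  have hdescent : ∀ k r, k * p + r + L ≤ N →
      cnt x u (k * p + r) = k * cnt x u p + cnt x u r := cnt_descent x u hper
  -- decomposition of a prefix [0,n) into blocks
  have hdec : ∀ n : ℕ, 2 * N ≤ n → ∃ K : ℕ,
      gj x Q K ≤ n ∧ n < gj x Q K + N ∧
      ((K : ℝ) * ((N : ℝ) + 1) ≤ 2 * (n : ℝ) + ((N : ℝ) + 1)) ∧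
      (∑ t ∈ Finset.range K, (gj x Q (t + 1) - gj x Q t) = gj x Q K) ∧
      (cnt x u (gj x Q K)
        ≤ (∑ t ∈ Finset.range K, cnt x u (gj x Q (t + 1) - gj x Q t)) + L * K) ∧
      ((∑ t ∈ Finset.range K, cnt x u (gj x Q (t + 1) - gj x Q t))
        ≤ cnt x u (gj x Q K) + L * K) := by
    intro n hn
    set K := Nat.findGreatest (fun k => gj x Q k ≤ n) n with hKdef
    have hjK : gj x Q K ≤ n := by
      have h00 : (fun k => gj x Q k ≤ n) 0 := by simp [gj_zero]
      exact Nat.findGreatest_spec (P := fun k => gj x Q k ≤ n) (Nat.zero_le n) h00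
    have hjK1 : n < gj x Q (K + 1) := by
      by_contra hc
      push_neg at hc
      have hKn : K + 1 ≤ n := le_trans (gj_ge hq (K + 1)) hc
      exact (Nat.findGreatest_is_greatest (lt_add_one K) hKn) hc
    have hjKn : n < gj x Q K + N := lt_of_lt_of_le hjK1 (gj_succ_le Q K)
    have hKreal : (K : ℝ) * ((N : ℝ) + 1) ≤ 2 * (n : ℝ) + ((N : ℝ) + 1) := by
      have h2t : (K / 2) * (N + 1) ≤ n :=
        le_trans (le_trans (gj_two_mul hq (K / 2)) (gj_mono hq (by omega))) hjK
      have h2tR : ((K / 2 : ℕ) : ℝ) * ((N : ℝ) + 1) ≤ (n : ℝ) := by exact_mod_cast h2t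
      have hK2 : (K : ℝ) ≤ 2 * ((K / 2 : ℕ) : ℝ) + 1 := by
        have : K ≤ 2 * (K / 2) + 1 := by omega
        exact_mod_cast this
      nlinarith [Nat.cast_nonneg (α := ℝ) N]
    obtain ⟨hb1', hb2'⟩ := blocks_sum_bounds hq hL K
    exact ⟨K, hjK, hjKn, hKreal, gj_sum hq K, hb1', hb2'⟩
  -- part A : find a "large" block with low density
  obtain ⟨n, hnC, hna⟩ := hfa (2 * N + ⌈(N : ℝ) / ε⌉₊ + M₀)
  have hn2N : 2 * N ≤ n := by omega
  have hnM₀ : M₀ ≤ n := by omega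
  have hnNε : (N : ℝ) ≤ ε * n := by
    have h1 : ⌈(N : ℝ) / ε⌉₊ ≤ n := by omega
    have h2 : (N : ℝ) / ε ≤ n := Nat.ceil_le.mp h1
    rw [div_le_iff₀ hε] at h2
    linarith [h2]
  have hn0 : (0 : ℝ) < n := by
    have : 1 ≤ n := by omega
    exact_mod_cast Nat.lt_of_lt_of_le Nat.zero_lt_one this
  obtain ⟨K, hjK, hjKn, hKreal, hgsum, hcnt1, hcnt2⟩ := hdec n hn2N
  -- common bounds for this decomposition
  have hEKbound : ∀ K' n' : ℕ, ((K' : ℝ) * ((N : ℝ) + 1) ≤ 2 * (n' : ℝ) + ((N : ℝ) + 1)) →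
      (N : ℝ) ≤ ε * n' → E * K' ≤ ε ^ 2 * n' * (1 / 25) := by
    intro K' n' hKr hNn
    have hn'0 : (0:ℝ) ≤ n' := Nat.cast_nonneg n'
    have hεn' : ε * n' ≤ 1 / 100 * n' := mul_le_mul_of_nonneg_right hε1 hn'0
    have hN2n : (N : ℝ) + 1 ≤ 2 * n' := by linarith
    have hK4 : (K' : ℝ) * ((N : ℝ) + 1) ≤ 4 * n' := by linarith
    have h100E : 100 * E ≤ ε ^ 2 * ((N : ℝ) + 1) := by
      have hz := sq_nonneg ε
      have hr : ε ^ 2 * ((N : ℝ) + 1) = ε ^ 2 * N + ε ^ 2 := by ring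
      linarith
    have hc : 100 * (E * K') ≤ ε ^ 2 * (4 * n') := by
      calc 100 * (E * K') = (100 * E) * K' := by ring
        _ ≤ (ε ^ 2 * ((N : ℝ) + 1)) * K' :=
            mul_le_mul_of_nonneg_right h100E (Nat.cast_nonneg K')
        _ = ε ^ 2 * ((K' : ℝ) * ((N : ℝ) + 1)) := by ring
        _ ≤ ε ^ 2 * (4 * n') := mul_le_mul_of_nonneg_left hK4 (sq_nonneg ε)
    nlinarith [hc]
  have hEK := hEKbound K n hKreal hnNε
  have hε2 : ε ^ 2 ≤ ε := by nlinarith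
  have hSG : (∑ t ∈ Finset.range K, ((gj x Q (t + 1) - gj x Q t : ℕ) : ℝ)) = (gj x Q K : ℝ) := by
    rw [← Nat.cast_sum, hgsum]
  have hextA : ∃ t, E ≤ ε * ((gj x Q (t + 1) - gj x Q t : ℕ) : ℝ) ∧
      (cnt x u (gj x Q (t + 1) - gj x Q t) : ℝ)
        ≤ (a + 20 * ε) * ((gj x Q (t + 1) - gj x Q t : ℕ) : ℝ) := by
    by_contra hcon
    push_neg at hcon
    set BigT : Finset ℕ := (Finset.range K).filter
        (fun t => E ≤ ε * ((gj x Q (t + 1) - gj x Q t : ℕ) : ℝ)) with hBigdef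
    set SmallT : Finset ℕ := (Finset.range K).filter
        (fun t => ¬ (E ≤ ε * ((gj x Q (t + 1) - gj x Q t : ℕ) : ℝ))) with hSmalldef
    have hsplitg : (∑ t ∈ BigT, ((gj x Q (t + 1) - gj x Q t : ℕ) : ℝ))
        + (∑ t ∈ SmallT, ((gj x Q (t + 1) - gj x Q t : ℕ) : ℝ)) = (gj x Q K : ℝ) := by
      rw [hBigdef, hSmalldef, Finset.sum_filter_add_sum_filter_not, hSG]
    have hsum1 : (a + 20 * ε) * (∑ t ∈ BigT, ((gj x Q (t + 1) - gj x Q t : ℕ) : ℝ))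
        ≤ ∑ t ∈ BigT, (cnt x u (gj x Q (t + 1) - gj x Q t) : ℝ) := by
      rw [Finset.mul_sum]
      refine Finset.sum_le_sum ?_
      intro t ht
      rw [hBigdef] at ht
      rcases Finset.mem_filter.mp ht with ⟨_, ht2⟩
      exact (hcon t ht2).le
    have hsum2 : (∑ t ∈ BigT, (cnt x u (gj x Q (t + 1) - gj x Q t) : ℝ))
        ≤ ∑ t ∈ Finset.range K, (cnt x u (gj x Q (t + 1) - gj x Q t) : ℝ) := by
      rw [hBigdef]
      exact Finset.sum_le_sum_of_subset_of_nonneg (Finset.filter_subset _ _)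
        (fun i _ _ => Nat.cast_nonneg _)
    have hsum3 : (∑ t ∈ Finset.range K, (cnt x u (gj x Q (t + 1) - gj x Q t) : ℝ))
        ≤ (cnt x u n : ℝ) + E * K := by
      have h1 : (∑ t ∈ Finset.range K, cnt x u (gj x Q (t + 1) - gj x Q t))
          ≤ cnt x u n + L * K := by
        have := cnt_mono x u hjK
        omega
      have h1R : (∑ t ∈ Finset.range K, (cnt x u (gj x Q (t + 1) - gj x Q t) : ℝ))
          ≤ (cnt x u n : ℝ) + (L : ℝ) * K := by exact_mod_cast h1
      have h2 : (L : ℝ) * K ≤ E * K :=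
        mul_le_mul_of_nonneg_right (by rw [hEdef]; linarith) (Nat.cast_nonneg K)
      linarith
    have hsmallsum : ε * (∑ t ∈ SmallT, ((gj x Q (t + 1) - gj x Q t : ℕ) : ℝ)) ≤ E * K := by
      have hb : ∀ t ∈ SmallT, ε * ((gj x Q (t + 1) - gj x Q t : ℕ) : ℝ) ≤ E := by
        intro t ht
        rw [hSmalldef] at ht
        rcases Finset.mem_filter.mp ht with ⟨_, ht2⟩
        rw [not_le] at ht2
        exact ht2.le
      have hcard : ((SmallT.card : ℕ) : ℝ) ≤ (K : ℝ) := by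
        have : SmallT.card ≤ K := by
          rw [hSmalldef]
          exact le_trans (Finset.card_filter_le _ _) (le_of_eq (Finset.card_range K))
        exact_mod_cast this
      calc ε * (∑ t ∈ SmallT, ((gj x Q (t + 1) - gj x Q t : ℕ) : ℝ))
          = ∑ t ∈ SmallT, ε * ((gj x Q (t + 1) - gj x Q t : ℕ) : ℝ) := Finset.mul_sum _ _ _
        _ ≤ SmallT.card • E := Finset.sum_le_card_nsmul _ _ _ hb
        _ = ((SmallT.card : ℕ) : ℝ) * E := nsmul_eq_mul _ _
        _ ≤ (K : ℝ) * E := mul_le_mul_of_nonneg_right hcard hE0.le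
        _ = E * K := by ring
    have hjKR : (n : ℝ) - N ≤ (gj x Q K : ℝ) := by
      have h := (Nat.cast_lt (α := ℝ)).mpr hjKn
      push_cast at h
      linarith
    have hEK' : E * K ≤ ε * n * (1 / 25) := by
      have h1 : ε ^ 2 * n ≤ ε * n := mul_le_mul_of_nonneg_right hε2 (Nat.cast_nonneg n)
      linarith
    have hSsmall : (∑ t ∈ SmallT, ((gj x Q (t + 1) - gj x Q t : ℕ) : ℝ))
        ≤ ε * n * (1 / 25) := by
      refine le_of_mul_le_mul_left ?_ hε
      calc ε * (∑ t ∈ SmallT, ((gj x Q (t + 1) - gj x Q t : ℕ) : ℝ))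
          ≤ E * K := hsmallsum
        _ ≤ ε ^ 2 * n * (1 / 25) := hEK
        _ = ε * (ε * n * (1 / 25)) := by ring
    have hSP_low : (n : ℝ) - N - ε * n * (1 / 25)
        ≤ (∑ t ∈ BigT, ((gj x Q (t + 1) - gj x Q t : ℕ) : ℝ)) := by
      linarith
    have h5 : (a + 20 * ε) * ((n : ℝ) - N - ε * n * (1 / 25))
        ≤ (a + 20 * ε) * (∑ t ∈ BigT, ((gj x Q (t + 1) - gj x Q t : ℕ) : ℝ)) :=
      mul_le_mul_of_nonneg_left hSP_low (by linarith)
    have hchain : (a + 20 * ε) * ((n : ℝ) - N - ε * n * (1 / 25))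
        ≤ (a + ε) * n + ε * n * (1 / 25) :=
      calc (a + 20 * ε) * ((n : ℝ) - N - ε * n * (1 / 25))
          ≤ (a + 20 * ε) * (∑ t ∈ BigT, ((gj x Q (t + 1) - gj x Q t : ℕ) : ℝ)) := h5
        _ ≤ ∑ t ∈ BigT, (cnt x u (gj x Q (t + 1) - gj x Q t) : ℝ) := hsum1
        _ ≤ ∑ t ∈ Finset.range K, (cnt x u (gj x Q (t + 1) - gj x Q t) : ℝ) := hsum2
        _ ≤ (cnt x u n : ℝ) + E * K := hsum3
        _ ≤ (a + ε) * n + E * K := by linarith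
        _ ≤ (a + ε) * n + ε * n * (1 / 25) := by linarith
    have hp1 : a * (N : ℝ) ≤ a * (ε * n) := mul_le_mul_of_nonneg_left hnNε ha0
    have hp2 : ε * (N : ℝ) ≤ ε * (ε * n) := mul_le_mul_of_nonneg_left hnNε hε.le
    have hεn_pos : 0 < ε * n := mul_pos hε hn0
    have hp3 : a * (ε * n) ≤ 1 * (ε * n) :=
      mul_le_mul_of_nonneg_right (by linarith) hεn_pos.le
    have hp4 : ε * (ε * n) ≤ (1 / 100) * (ε * n) :=
      mul_le_mul_of_nonneg_right hε1 hεn_pos.le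
    nlinarith [hchain, hp1, hp2, hp3, hp4, hεn_pos]
  -- extract the low-density large block and bound the density of the prefix of length p
  obtain ⟨ta, hmE, hmcnt⟩ := hextA
  set m := gj x Q (ta + 1) - gj x Q ta with hmdef
  have hmN : m ≤ N := hgapN ta
  have hpm : p ≤ m := by
    rw [hpdef]
    exact Nat.sInf_le ⟨⟨ta, hmdef.symm⟩, hmE⟩
  have hmcast : (0:ℝ) ≤ (m:ℝ) := Nat.cast_nonneg m
  have hεmm : ε * (m:ℝ) ≤ 1 * m := mul_le_mul_of_nonneg_right (by linarith) hmcast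
  have hLm : L + 1 ≤ m := by
    have h1 : ((L + 1 : ℕ) : ℝ) ≤ (m : ℝ) := by push_cast; rw [hEdef] at hmE; linarith
    exact_mod_cast h1
  have hLεp : (L : ℝ) ≤ ε * p := by rw [hEdef] at hpR; linarith
  have hEεp : E ≤ ε * (p:ℝ) := hpR
  have hcp : (cnt x u p : ℝ) ≤ (a + 43 * ε) * p := by
    set mh := m - L with hmhdef
    have hmh : mh + L = m := by omega
    set k := mh / p with hkdef
    set r := mh % p with hrdef
    have hkr : k * p + r = mh := by rw [Nat.mul_comm]; exact Nat.div_add_mod mh p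
    have hrp : r < p := Nat.mod_lt _ hppos
    have hNle : k * p + r + L ≤ N := by omega
    have hdesc := hdescent k r hNle
    have hrRp : (r : ℝ) ≤ (p : ℝ) := by exact_mod_cast hrp.le
    have hppos' : (0:ℝ) < (p:ℝ) := by exact_mod_cast hppos
    rcases Nat.eq_zero_or_pos k with hk0 | hk1
    · -- m is within L of p
      have hmhr : mh = r := by rw [hk0] at hkr; simpa using hkr.symm
      have hmpL : (m : ℝ) ≤ (p : ℝ) + L := by
        have : m ≤ p + L := by omega
        exact_mod_cast this
      have h1 : (cnt x u p : ℝ) ≤ (cnt x u m : ℝ) := by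
        exact_mod_cast cnt_mono x u hpm
      have h2 : (a + 20 * ε) * (m : ℝ) ≤ (a + 20 * ε) * ((p : ℝ) + L) :=
        mul_le_mul_of_nonneg_left hmpL (by linarith)
      have h4 : (a + 20 * ε) * (L : ℝ) ≤ 2 * (L : ℝ) :=
        mul_le_mul_of_nonneg_right (by linarith) (Nat.cast_nonneg L)
      linarith [mul_nonneg hε.le hppos'.le, h1, h2, h4, hmcnt]
    · -- genuine descent
      have hkR : (1 : ℝ) ≤ (k : ℝ) := by exact_mod_cast hk1
      have hk0R : (0 : ℝ) < (k : ℝ) := by linarith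
      have hmR : (m : ℝ) = (k : ℝ) * p + r + L := by
        have h1 : m = k * p + r + L := by omega
        rw [h1]; push_cast; ring
      have hcr : (a - ε) * r - M₀ ≤ (cnt x u r : ℝ) := by
        rcases le_or_gt M₀ r with h | h
        · have := hlow r h; linarith
        · have hrM : (r : ℝ) ≤ (M₀ : ℝ) := by exact_mod_cast h.le
          have h0 : (0:ℝ) ≤ (cnt x u r : ℝ) := Nat.cast_nonneg _
          have h1 : (a - ε) * r ≤ 1 * r :=
            mul_le_mul_of_nonneg_right (by linarith) (Nat.cast_nonneg r)
          linarith
      have c1 : (k : ℝ) * (cnt x u p : ℝ) + (cnt x u r : ℝ) ≤ (cnt x u m : ℝ) := by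
        have hmono : cnt x u mh ≤ cnt x u m := cnt_mono x u (by omega)
        have hdc : (cnt x u mh : ℝ) = (k : ℝ) * (cnt x u p : ℝ) + (cnt x u r : ℝ) := by
          have h1 : cnt x u mh = k * cnt x u p + cnt x u r := by
            rw [← hkr]; exact hdesc
          rw [h1]; push_cast; ring
        have hmonoR : (cnt x u mh : ℝ) ≤ (cnt x u m : ℝ) := by exact_mod_cast hmono
        linarith
      have hεr : ε * (r:ℝ) ≤ ε * (p:ℝ) := mul_le_mul_of_nonneg_left hrRp hε.le
      have haL : (a + 20 * ε) * (L : ℝ) ≤ 2 * (L : ℝ) :=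
        mul_le_mul_of_nonneg_right (by linarith) (Nat.cast_nonneg L)
      have hεkp : ε * (p:ℝ) ≤ ε * ((k:ℝ) * p) := by
        have h0 : (0:ℝ) ≤ ε * p := mul_nonneg hε.le hppos'.le
        have h1 := mul_le_mul_of_nonneg_left hkR h0
        linarith [h1]
      rw [hmR] at hmcnt
      have e2 : (k:ℝ) * (cnt x u p : ℝ)
          ≤ (a + 20 * ε) * ((k:ℝ) * p) + (21 * ε) * r + ((a + 20 * ε) * L + M₀) := by
        linarith [c1, hmcnt, hcr]
      have e9 : (a + 20 * ε) * ((k:ℝ) * p) + 23 * (ε * ((k:ℝ) * p))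
          = (k:ℝ) * ((a + 43 * ε) * p) := by ring
      have hfinal : (k : ℝ) * (cnt x u p : ℝ) ≤ (k : ℝ) * ((a + 43 * ε) * p) := by
        have e5 : 2 * (L:ℝ) + (M₀:ℝ) ≤ 2 * E := by rw [hEdef]; linarith
        linarith [e2, hεr, haL, e5, hEεp, hεkp, e9]
      exact le_of_mul_le_mul_left hfinal hk0R
  -- part B : find a large block with high density, unless b is already close to a
  rcases le_or_gt b (a + 20 * ε) with hbtriv | hbgt
  · linarith
  have hb20 : 0 ≤ b - 20 * ε := by linarith
  obtain ⟨n', hnC', hnb⟩ := hfb (2 * N + ⌈(N : ℝ) / ε⌉₊ + M₀)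
  have hn2N' : 2 * N ≤ n' := by omega
  have hnNε' : (N : ℝ) ≤ ε * n' := by
    have h1 : ⌈(N : ℝ) / ε⌉₊ ≤ n' := by omega
    have h2 : (N : ℝ) / ε ≤ n' := Nat.ceil_le.mp h1
    rw [div_le_iff₀ hε] at h2
    linarith [h2]
  have hn0' : (0 : ℝ) < n' := by
    have : 1 ≤ n' := by omega
    exact_mod_cast Nat.lt_of_lt_of_le Nat.zero_lt_one this
  obtain ⟨K', hjK', hjKn', hKreal', hgsum', hcnt1', hcnt2'⟩ := hdec n' hn2N'
  have hEKb := hEKbound K' n' hKreal' hnNε'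
  have hSG' : (∑ t ∈ Finset.range K', ((gj x Q (t + 1) - gj x Q t : ℕ) : ℝ)) = (gj x Q K' : ℝ) := by
    rw [← Nat.cast_sum, hgsum']
  have hEKb' : E * K' ≤ ε * n' * (1 / 25) := by
    have h1 : ε ^ 2 * n' ≤ ε * n' := mul_le_mul_of_nonneg_right hε2 (Nat.cast_nonneg n')
    linarith
  have hextB : ∃ t, E ≤ ε * ((gj x Q (t + 1) - gj x Q t : ℕ) : ℝ) ∧
      (b - 20 * ε) * ((gj x Q (t + 1) - gj x Q t : ℕ) : ℝ)
        ≤ (cnt x u (gj x Q (t + 1) - gj x Q t) : ℝ) := by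
    by_contra hcon
    push_neg at hcon
    set BigT : Finset ℕ := (Finset.range K').filter
        (fun t => E ≤ ε * ((gj x Q (t + 1) - gj x Q t : ℕ) : ℝ)) with hBigdef
    set SmallT : Finset ℕ := (Finset.range K').filter
        (fun t => ¬ (E ≤ ε * ((gj x Q (t + 1) - gj x Q t : ℕ) : ℝ))) with hSmalldef
    have hsplitc : (∑ t ∈ BigT, (cnt x u (gj x Q (t + 1) - gj x Q t) : ℝ))
        + (∑ t ∈ SmallT, (cnt x u (gj x Q (t + 1) - gj x Q t) : ℝ))
        = ∑ t ∈ Finset.range K', (cnt x u (gj x Q (t + 1) - gj x Q t) : ℝ) := by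
      rw [hBigdef, hSmalldef, Finset.sum_filter_add_sum_filter_not]
    have hsum1 : (∑ t ∈ BigT, (cnt x u (gj x Q (t + 1) - gj x Q t) : ℝ))
        ≤ (b - 20 * ε) * (∑ t ∈ BigT, ((gj x Q (t + 1) - gj x Q t : ℕ) : ℝ)) := by
      rw [Finset.mul_sum]
      refine Finset.sum_le_sum ?_
      intro t ht
      rw [hBigdef] at ht
      rcases Finset.mem_filter.mp ht with ⟨_, ht2⟩
      exact (hcon t ht2).le
    have hBg_le : (∑ t ∈ BigT, ((gj x Q (t + 1) - gj x Q t : ℕ) : ℝ)) ≤ (gj x Q K' : ℝ) := by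
      rw [← hSG', hBigdef]
      exact Finset.sum_le_sum_of_subset_of_nonneg (Finset.filter_subset _ _)
        (fun i _ _ => Nat.cast_nonneg _)
    have hsum1' : (∑ t ∈ BigT, (cnt x u (gj x Q (t + 1) - gj x Q t) : ℝ))
        ≤ (b - 20 * ε) * n' := by
      have h2 : (gj x Q K' : ℝ) ≤ n' := by exact_mod_cast hjK'
      have h3 : (b - 20 * ε) * (∑ t ∈ BigT, ((gj x Q (t + 1) - gj x Q t : ℕ) : ℝ))
          ≤ (b - 20 * ε) * n' := mul_le_mul_of_nonneg_left (le_trans hBg_le h2) hb20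
      linarith
    have hsmallc : (∑ t ∈ SmallT, (cnt x u (gj x Q (t + 1) - gj x Q t) : ℝ))
        ≤ ε * n' * (1 / 25) := by
      have h1 : (∑ t ∈ SmallT, (cnt x u (gj x Q (t + 1) - gj x Q t) : ℝ))
          ≤ ∑ t ∈ SmallT, ((gj x Q (t + 1) - gj x Q t : ℕ) : ℝ) := by
        refine Finset.sum_le_sum ?_
        intro t _
        exact_mod_cast cnt_le x u _
      have hsmallsum : ε * (∑ t ∈ SmallT, ((gj x Q (t + 1) - gj x Q t : ℕ) : ℝ)) ≤ E * K' := by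
        have hb : ∀ t ∈ SmallT, ε * ((gj x Q (t + 1) - gj x Q t : ℕ) : ℝ) ≤ E := by
          intro t ht
          rw [hSmalldef] at ht
          rcases Finset.mem_filter.mp ht with ⟨_, ht2⟩
          rw [not_le] at ht2
          exact ht2.le
        have hcard : ((SmallT.card : ℕ) : ℝ) ≤ (K' : ℝ) := by
          have : SmallT.card ≤ K' := by
            rw [hSmalldef]
            exact le_trans (Finset.card_filter_le _ _) (le_of_eq (Finset.card_range K'))
          exact_mod_cast this
        calc ε * (∑ t ∈ SmallT, ((gj x Q (t + 1) - gj x Q t : ℕ) : ℝ))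
            = ∑ t ∈ SmallT, ε * ((gj x Q (t + 1) - gj x Q t : ℕ) : ℝ) := Finset.mul_sum _ _ _
          _ ≤ SmallT.card • E := Finset.sum_le_card_nsmul _ _ _ hb
          _ = ((SmallT.card : ℕ) : ℝ) * E := nsmul_eq_mul _ _
          _ ≤ (K' : ℝ) * E := mul_le_mul_of_nonneg_right hcard hE0.le
          _ = E * K' := by ring
      have h2 : (∑ t ∈ SmallT, ((gj x Q (t + 1) - gj x Q t : ℕ) : ℝ)) ≤ ε * n' * (1 / 25) := by
        refine le_of_mul_le_mul_left ?_ hε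
        calc ε * (∑ t ∈ SmallT, ((gj x Q (t + 1) - gj x Q t : ℕ) : ℝ))
            ≤ E * K' := hsmallsum
          _ ≤ ε ^ 2 * n' * (1 / 25) := hEKb
          _ = ε * (ε * n' * (1 / 25)) := by ring
      linarith
    -- lower bound on the total count
    have hlow1 : (cnt x u n' : ℝ) - (N : ℝ) - E * K'
        ≤ ∑ t ∈ Finset.range K', (cnt x u (gj x Q (t + 1) - gj x Q t) : ℝ) := by
      have h1 : cnt x u n' ≤ cnt x u (gj x Q K') + N := by
        have h2 : n' ≤ gj x Q K' + N := hjKn'.le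
        have := cnt_mono x u h2
        have := cnt_add_le x u (gj x Q K') N
        omega
      have h3 : cnt x u (gj x Q K')
          ≤ (∑ t ∈ Finset.range K', cnt x u (gj x Q (t + 1) - gj x Q t)) + L * K' := hcnt1'
      have h4 : (cnt x u n' : ℝ)
          ≤ (∑ t ∈ Finset.range K', (cnt x u (gj x Q (t + 1) - gj x Q t) : ℝ))
            + (L : ℝ) * K' + N := by exact_mod_cast le_trans h1 (by omega)
      have h5 : (L : ℝ) * K' ≤ E * K' :=
        mul_le_mul_of_nonneg_right (by rw [hEdef]; linarith) (Nat.cast_nonneg K')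
      linarith
    have hcontr : (b - ε) * n' - (N : ℝ) - E * K'
        ≤ (b - 20 * ε) * n' + ε * n' * (1 / 25) :=
      calc (b - ε) * (n' : ℝ) - (N : ℝ) - E * K'
          ≤ (cnt x u n' : ℝ) - (N : ℝ) - E * K' := by linarith [hnb]
        _ ≤ ∑ t ∈ Finset.range K', (cnt x u (gj x Q (t + 1) - gj x Q t) : ℝ) := hlow1
        _ = (∑ t ∈ BigT, (cnt x u (gj x Q (t + 1) - gj x Q t) : ℝ))
            + (∑ t ∈ SmallT, (cnt x u (gj x Q (t + 1) - gj x Q t) : ℝ)) := hsplitc.symm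
        _ ≤ (b - 20 * ε) * n' + ε * n' * (1 / 25) := by linarith [hsum1', hsmallc]
    have hεn_pos : 0 < ε * n' := mul_pos hε hn0'
    linarith [hcontr, hnNε', hEKb', hεn_pos]
  -- final comparison via the descent at p
  obtain ⟨tb, hmE', hmcnt'⟩ := hextB
  set m' := gj x Q (tb + 1) - gj x Q tb with hmdef'
  have hmN' : m' ≤ N := hgapN tb
  have hpm' : p ≤ m' := by
    rw [hpdef]
    exact Nat.sInf_le ⟨⟨tb, hmdef'.symm⟩, hmE'⟩
  have hm'pos : 0 < m' := by omega
  have hm'R : (0:ℝ) < (m' : ℝ) := by exact_mod_cast hm'pos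
  have hLm' : L + 1 ≤ m' := by
    have hεm' : ε * (m':ℝ) ≤ 1 * m' := mul_le_mul_of_nonneg_right (by linarith) hm'R.le
    have h1 : ((L + 1 : ℕ) : ℝ) ≤ (m' : ℝ) := by push_cast; rw [hEdef] at hmE'; linarith
    exact_mod_cast h1
  have hppos' : (0:ℝ) < (p:ℝ) := by exact_mod_cast hppos
  set mh' := m' - L with hmhdef'
  have hmh' : mh' + L = m' := by omega
  set k' := mh' / p with hkdef'
  set r' := mh' % p with hrdef'
  have hkr' : k' * p + r' = mh' := by rw [Nat.mul_comm]; exact Nat.div_add_mod mh' p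
  have hrp' : r' < p := Nat.mod_lt _ hppos
  have hNle' : k' * p + r' + L ≤ N := by omega
  have hdesc' := hdescent k' r' hNle'
  have hrRp' : (r' : ℝ) ≤ (p : ℝ) := by exact_mod_cast hrp'.le
  rcases Nat.eq_zero_or_pos k' with hk0' | hk1'
  · -- m' close to p
    have hmhr' : mh' = r' := by rw [hk0'] at hkr'; simpa using hkr'.symm
    have hm'pL : m' ≤ p + L := by omega
    have h1 : cnt x u m' ≤ cnt x u p + L := by
      have h2 := cnt_mono x u hm'pL
      have h3 := cnt_add_le x u p L
      omega
    have h1R : (cnt x u m' : ℝ) ≤ (cnt x u p : ℝ) + L := by exact_mod_cast h1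
    have hm'ge : (p : ℝ) ≤ (m' : ℝ) := by exact_mod_cast hpm'
    have h4 : (b - 20 * ε) * (m' : ℝ) ≤ (a + 43 * ε) * p + ε * p := by linarith [hmcnt', hcp, hLεp]
    have h5 : (a + 44 * ε) * (p : ℝ) ≤ (a + 44 * ε) * m' :=
      mul_le_mul_of_nonneg_left hm'ge (by linarith)
    have h6 : (b - 20 * ε) * (m' : ℝ) ≤ (a + 44 * ε) * m' := by
      have : (a + 43 * ε) * (p:ℝ) + ε * p = (a + 44 * ε) * p := by ring
      linarith
    have h7 : b - 20 * ε ≤ a + 44 * ε := le_of_mul_le_mul_right (by linarith [h6]) hm'R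
    linarith
  · -- genuine descent
    have hkR' : (1 : ℝ) ≤ (k' : ℝ) := by exact_mod_cast hk1'
    have hk0R' : (0 : ℝ) < (k' : ℝ) := by linarith
    have hmR' : (m' : ℝ) = (k' : ℝ) * p + r' + L := by
      have h1 : m' = k' * p + r' + L := by omega
      rw [h1]; push_cast; ring
    have hcr' : (cnt x u r' : ℝ) ≤ (b + ε) * r' + M₀ := by
      rcases le_or_gt M₀ r' with h | h
      · have := hhigh r' h; linarith
      · have hrM : (r' : ℝ) ≤ (M₀ : ℝ) := by exact_mod_cast h.le
        have h0 : (cnt x u r' : ℝ) ≤ (r' : ℝ) := by exact_mod_cast cnt_le x u r'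
        have h1 : 0 ≤ (b + ε) * (r' : ℝ) := mul_nonneg (by linarith) (Nat.cast_nonneg r')
        linarith
    have c1' : (cnt x u m' : ℝ) ≤ (k' : ℝ) * (cnt x u p : ℝ) + (cnt x u r' : ℝ) + L := by
      have hmono : cnt x u m' ≤ cnt x u mh' + L := by
        have := cnt_add_le x u mh' L
        rw [hmh'] at this
        exact this
      have hdc : (cnt x u mh' : ℝ) = (k' : ℝ) * (cnt x u p : ℝ) + (cnt x u r' : ℝ) := by
        have h1 : cnt x u mh' = k' * cnt x u p + cnt x u r' := by
          rw [← hkr']; exact hdesc'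
        rw [h1]; push_cast; ring
      have hmonoR : (cnt x u m' : ℝ) ≤ (cnt x u mh' : ℝ) + L := by exact_mod_cast hmono
      linarith
    rw [hmR'] at hmcnt'
    have hεr' : ε * (r':ℝ) ≤ ε * (p:ℝ) := mul_le_mul_of_nonneg_left hrRp' hε.le
    have hεkp' : ε * (p:ℝ) ≤ ε * ((k':ℝ) * p) := by
      have h0 : (0:ℝ) ≤ ε * p := mul_nonneg hε.le hppos'.le
      have h1 := mul_le_mul_of_nonneg_left hkR' h0
      linarith [h1]
    have hkcp : (k' : ℝ) * (cnt x u p : ℝ) ≤ (k' : ℝ) * ((a + 43 * ε) * p) :=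
      mul_le_mul_of_nonneg_left hcp hk0R'.le
    -- assemble: (b - 20ε) k' p ≤ (a + 43ε) k' p + 21 ε r' + E + ... 
    have hbL : 0 ≤ (b - 20 * ε) * (L : ℝ) := mul_nonneg hb20 (Nat.cast_nonneg L)
    have hbr' : (b - 20 * ε) * (r' : ℝ) ≤ (b + ε) * (r' : ℝ) := by
      have := mul_le_mul_of_nonneg_right (show b - 20 * ε ≤ b + ε by linarith)
        (Nat.cast_nonneg (α := ℝ) r')
      linarith [this]
    have hML : (M₀ : ℝ) + L ≤ ε * p := by rw [hEdef] at hEεp; linarith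
    have hkey : (b - 20 * ε) * ((k' : ℝ) * p)
        ≤ (a + 43 * ε) * ((k' : ℝ) * p) + 21 * (ε * r') + (ε * p) + (ε * p) := by
      have hexp : (b - 20 * ε) * ((k' : ℝ) * p + r' + L)
          = (b - 20 * ε) * ((k' : ℝ) * p) + (b - 20 * ε) * r' + (b - 20 * ε) * L := by ring
      have h21 : (b + ε) * (r' : ℝ) - (b - 20 * ε) * (r' : ℝ) = 21 * (ε * r') := by ring
      have hkcp' : (k' : ℝ) * ((a + 43 * ε) * p) = (a + 43 * ε) * ((k' : ℝ) * p) := by ring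
      linarith [hmcnt', c1', hcr', hkcp, hbL, hML, hexp, h21, hkcp']
    have hfin : (b - 20 * ε) * ((k' : ℝ) * p) ≤ (a + 65 * ε) * ((k' : ℝ) * p) := by
      have h1 : 21 * (ε * (r' : ℝ)) ≤ 21 * (ε * p) := by linarith [hεr']
      have h2 : 23 * (ε * (p : ℝ)) ≤ 23 * (ε * ((k' : ℝ) * p)) := by linarith [hεkp']
      have h3 : (a + 43 * ε) * ((k' : ℝ) * p) + 23 * (ε * ((k' : ℝ) * p))
          = (a + 66 * ε) * ((k' : ℝ) * p) := by ring
      have h4 : (a + 66 * ε) * ((k' : ℝ) * p) ≤ (a + 66 * ε) * ((k' : ℝ) * p) := le_refl _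
      -- 21 ε p + 2 ε p = 23 ε p
      linarith [hkey, h1, h2, h3.le, h3.ge]
    have hkp_pos : (0:ℝ) < (k' : ℝ) * p := mul_pos hk0R' hppos'
    have h7 : b - 20 * ε ≤ a + 65 * ε := le_of_mul_le_mul_right (by linarith [hfin]) hkp_pos
    linarith


lemma occCount_eq_cnt (x : ℕ → A) (u : List A) (n : ℕ) :
    occCount x u n = cnt x u (n + 1 - u.length) := by
  have hset : {i : ℕ | i + u.length ≤ n ∧ OccursAt x u i}
      = ↑((Finset.range (n + 1 - u.length)).filter (fun i => OccursAt x u i)) := by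
    ext i
    simp only [Set.mem_setOf_eq, Finset.coe_filter, Set.mem_setOf_eq, Finset.mem_range]
    constructor
    · rintro ⟨h1, h2⟩; exact ⟨by omega, h2⟩
    · rintro ⟨h1, h2⟩; exact ⟨by omega, h2⟩
  rw [occCount, hset, Set.ncard_coe_finset]
  rfl

theorem multiScaleQuasiperiodic_frequencies_aux {A : Type*} [Finite A]
    (x : ℕ → A) (h : MultiScaleQuasiperiodic x)
    (u : List A) :
    ∃ L : ℝ, Filter.Tendsto (fun n : ℕ => (occCount x u n : ℝ) / n)
      Filter.atTop (nhds L) := by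
  rcases eq_or_ne u [] with rfl | hu0
  · refine ⟨1, ?_⟩
    have hocc : ∀ n : ℕ, occCount x ([] : List A) n = n + 1 := by
      intro n
      have hset : {i : ℕ | i + ([] : List A).length ≤ n ∧ OccursAt x [] i}
          = ↑(Finset.range (n + 1)) := by
        ext i
        simp only [Set.mem_setOf_eq, List.length_nil, Nat.add_zero, Finset.coe_range,
          Set.mem_Iio]
        constructor
        · rintro ⟨h1, _⟩; omega
        · intro h1
          refine ⟨by omega, ?_⟩
          intro k
          exact absurd k.isLt (by simp)
      rw [occCount, hset, Set.ncard_coe_finset, Finset.card_range]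
    have h1 : Tendsto (fun n : ℕ => 1 + 1 / (n : ℝ)) atTop (nhds 1) := by
      have h2 := tendsto_const_div_atTop_nhds_zero_nat (1:ℝ)
      have h3 := (tendsto_const_nhds (x := (1:ℝ)) (f := atTop (α := ℕ))).add h2
      simpa using h3
    refine h1.congr' ?_
    filter_upwards [eventually_ge_atTop 1] with n hn
    have hnR : (n : ℝ) ≠ 0 := by
      have : (0:ℝ) < n := by exact_mod_cast hn
      linarith
    rw [hocc n]
    push_cast
    field_simp
  · -- main case
    have hL : 1 ≤ u.length := List.length_pos_iff.mpr hu0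
    set d : ℕ → ℝ := fun n => (cnt x u n : ℝ) / n with hd
    have hd01 : ∀ n, 0 ≤ d n ∧ d n ≤ 1 := by
      intro n
      rcases Nat.eq_zero_or_pos n with h0 | h0
      · subst h0; simp [hd]
      · have hnR : (0:ℝ) < n := by exact_mod_cast h0
        constructor
        · exact div_nonneg (Nat.cast_nonneg _) hnR.le
        · rw [hd]
          rw [div_le_one hnR]
          exact_mod_cast cnt_le x u n
    have hbdd_le : IsBoundedUnder (· ≤ ·) atTop d := isBoundedUnder_of ⟨1, fun n => (hd01 n).2⟩
    have hbdd_ge : IsBoundedUnder (· ≥ ·) atTop d := isBoundedUnder_of ⟨0, fun n => (hd01 n).1⟩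
    set aa := liminf d atTop with haa
    set bb := limsup d atTop with hbb
    have hab : aa ≤ bb := liminf_le_limsup hbdd_le hbdd_ge
    have ha0 : 0 ≤ aa :=
      le_liminf_of_le hbdd_le.isCoboundedUnder_ge (Eventually.of_forall fun n => (hd01 n).1)
    have hb1 : bb ≤ 1 :=
      limsup_le_of_le hbdd_ge.isCoboundedUnder_le (Eventually.of_forall fun n => (hd01 n).2)
    have hQex : ∀ C : ℕ, ∃ Q : List A, IsQuasiperiod x Q ∧ C ≤ Q.length := by
      intro C
      by_contra hc
      push_neg at hc
      exact h (Set.Finite.subset (List.finite_length_lt A C) (fun q hq => hc q hq))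
    have hba : bb ≤ aa := by
      refine le_of_forall_pos_le_add ?_
      intro δ hδ
      set ε := min (δ / 200) (1 / 100) with hεdef
      have hε0 : 0 < ε := lt_min (by positivity) (by norm_num)
      have hε1 : ε ≤ 1 / 100 := min_le_right _ _
      have hεδ : 200 * ε ≤ δ := by
        have h1 := min_le_left (δ / 200) (1 / 100)
        have : ε ≤ δ / 200 := h1
        linarith
      have hev1 : ∀ᶠ n in atTop, aa - ε < d n :=
        eventually_lt_of_lt_liminf (by linarith) hbdd_ge
      have hev2 : ∀ᶠ n in atTop, d n < bb + ε :=
        eventually_lt_of_limsup_lt (by linarith) hbdd_le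
      rcases eventually_atTop.mp (hev1.and hev2) with ⟨M₁, hM₁⟩
      set M₀ := max M₁ 1 with hM₀def
      have hM₀1 : 1 ≤ M₀ := le_max_right _ _
      have hlow : ∀ n : ℕ, M₀ ≤ n → (aa - ε) * n ≤ (cnt x u n : ℝ) := by
        intro n hn
        have hn1 : 1 ≤ n := le_trans hM₀1 hn
        have hnR : (0:ℝ) < n := by exact_mod_cast hn1
        have h2 := (hM₁ n (le_trans (le_max_left _ _) hn)).1
        rw [hd] at h2
        rw [lt_div_iff₀ hnR] at h2
        linarith
      have hhigh : ∀ n : ℕ, M₀ ≤ n → (cnt x u n : ℝ) ≤ (bb + ε) * n := by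
        intro n hn
        have hn1 : 1 ≤ n := le_trans hM₀1 hn
        have hnR : (0:ℝ) < n := by exact_mod_cast hn1
        have h2 := (hM₁ n (le_trans (le_max_left _ _) hn)).2
        rw [hd] at h2
        rw [div_lt_iff₀ hnR] at h2
        linarith
      have hfa : ∀ C : ℕ, ∃ n : ℕ, C ≤ n ∧ (cnt x u n : ℝ) ≤ (aa + ε) * n := by
        intro C
        have hfreq : ∃ᶠ n in atTop, d n < aa + ε :=
          frequently_lt_of_liminf_lt hbdd_le.isCoboundedUnder_ge (by linarith)
        obtain ⟨n, hn1, hn2⟩ := (hfreq.and_eventually (eventually_ge_atTop (max C 1))).exists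
        refine ⟨n, le_trans (le_max_left _ _) hn2, ?_⟩
        have hnR : (0:ℝ) < n := by
          have : 1 ≤ n := le_trans (le_max_right _ _) hn2
          exact_mod_cast this
        rw [hd, div_lt_iff₀ hnR] at hn1
        linarith
      have hfb : ∀ C : ℕ, ∃ n : ℕ, C ≤ n ∧ (bb - ε) * n ≤ (cnt x u n : ℝ) := by
        intro C
        have hfreq : ∃ᶠ n in atTop, bb - ε < d n :=
          frequently_lt_of_lt_limsup hbdd_ge.isCoboundedUnder_le (by linarith)
        obtain ⟨n, hn1, hn2⟩ := (hfreq.and_eventually (eventually_ge_atTop (max C 1))).exists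
        refine ⟨n, le_trans (le_max_left _ _) hn2, ?_⟩
        have hnR : (0:ℝ) < n := by
          have : 1 ≤ n := le_trans (le_max_right _ _) hn2
          exact_mod_cast this
        rw [hd, lt_div_iff₀ hnR] at hn1
        linarith
      obtain ⟨Q, hq, hQlen⟩ :=
        hQex (⌈(100 * ((M₀ : ℝ) + u.length + 1)) / ε ^ 2⌉₊ + 1)
      have hε2 : (0:ℝ) < ε ^ 2 := by positivity
      have hNQ : (100 : ℝ) * ((M₀ : ℝ) + u.length + 1) ≤ ε ^ 2 * Q.length := by
        have h1 : (⌈(100 * ((M₀ : ℝ) + u.length + 1)) / ε ^ 2⌉₊ : ℝ) ≤ Q.length := by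
          have : (⌈(100 * ((M₀ : ℝ) + u.length + 1)) / ε ^ 2⌉₊ : ℕ) ≤ Q.length := by omega
          exact_mod_cast this
        have h2 := Nat.le_ceil ((100 * ((M₀ : ℝ) + u.length + 1)) / ε ^ 2)
        have h3 : (100 * ((M₀ : ℝ) + u.length + 1)) / ε ^ 2 ≤ Q.length := le_trans h2 h1
        rw [div_le_iff₀ hε2] at h3
        linarith
      have hkey := key x u Q hL hq aa bb ε M₀ hM₀1 hε0 hε1 ha0 hab hb1 hNQ hlow hhigh hfa hfb
      linarith
    have hbeq : bb = aa := le_antisymm hba hab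
    have htend : Tendsto d atTop (nhds aa) :=
      tendsto_of_liminf_eq_limsup haa.symm hbeq hbdd_le hbdd_ge
    refine ⟨aa, ?_⟩
    have hdiff : Tendsto
        (fun n : ℕ => ((cnt x u (n + 1 - u.length) : ℝ) - (cnt x u n : ℝ)) / n)
        atTop (nhds 0) := by
      apply squeeze_zero_norm' (a := fun n : ℕ => ((u.length : ℝ) + 1) / n)
      · filter_upwards [eventually_ge_atTop u.length] with n hn
        have hnum : |(cnt x u (n + 1 - u.length) : ℝ) - (cnt x u n : ℝ)|
            ≤ (u.length : ℝ) + 1 := by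
          have h1 : cnt x u n ≤ cnt x u (n + 1 - u.length) + u.length := by
            have h2 : cnt x u (n + 1) ≤ cnt x u (n + 1 - u.length) + u.length := by
              have h3 := cnt_add_le x u (n + 1 - u.length) u.length
              have h4 : n + 1 - u.length + u.length = n + 1 := by omega
              rw [h4] at h3
              exact h3
            have h5 : cnt x u n ≤ cnt x u (n + 1) := cnt_mono x u (by omega)
            omega
          have h6 : cnt x u (n + 1 - u.length) ≤ cnt x u n + 1 := by
            have h7 := cnt_add_le x u n 1
            have h8 : cnt x u (n + 1 - u.length) ≤ cnt x u (n + 1) := cnt_mono x u (by omega)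
            omega
          rw [abs_le]
          constructor
          · have := (Nat.cast_le (α := ℝ)).mpr h1; push_cast at this ⊢; linarith
          · have := (Nat.cast_le (α := ℝ)).mpr h6; push_cast at this ⊢; linarith
        rcases Nat.eq_zero_or_pos n with h0 | h0
        · subst h0; simp
        · have hnR : (0:ℝ) < n := by exact_mod_cast h0
          rw [norm_div, Real.norm_natCast]
          gcongr
          simpa [Real.norm_eq_abs] using hnum
      · exact tendsto_const_div_atTop_nhds_zero_nat _
    have hcomb : Tendsto (fun n : ℕ => (cnt x u (n + 1 - u.length) : ℝ) / n)
        atTop (nhds aa) := by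
      have h1 := htend.add hdiff
      rw [add_zero] at h1
      refine h1.congr ?_
      intro n
      rw [hd]
      rw [← add_div]
      ring_nf
    refine hcomb.congr ?_
    intro n
    rw [occCount_eq_cnt]

end Freq

/-- in a multi-scale quasiperiodic word, every factor has a frequency. -/
theorem multiScaleQuasiperiodic_frequencies {A : Type*} [Finite A]
    (x : ℕ → A) (h : MultiScaleQuasiperiodic x)
    (u : List A) (hu : IsFactor x u) :
    ∃ L : ℝ, Filter.Tendsto (fun n : ℕ => (occCount x u n : ℝ) / n)
      Filter.atTop (nhds L) := by
  exact multiScaleQuasiperiodic_frequencies_aux x h u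
end

section
/- Let x be an infinite word with quasiperiod q and let u be any finite nonempty word. Then liminf_{n→∞} (1/n)·#(u, x_0x_1…x_{n−1}) ≥ #(u, q)/(2|q|), where #(u, v) denotes the number of occurrences of u in the finite word v. -/
open Filter MeasureTheory Topology

/- ### Auxiliary results -/

lemma occSet_subset_Iio {A : Type*} (x : ℕ → A) (u : List A) (hu : u ≠ []) (n : ℕ) :
    {i : ℕ | i + u.length ≤ n ∧ OccursAt x u i} ⊆ Set.Iio n := by
  intro i hi
  have h1 : 1 ≤ u.length := List.length_pos_iff.mpr hu
  have h2 := hi.1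
  simp only [Set.mem_Iio]
  omega

lemma occCount_le_n {A : Type*} (x : ℕ → A) (u : List A) (hu : u ≠ []) (n : ℕ) :
    occCount x u n ≤ n := by
  calc occCount x u n ≤ (Set.Iio n).ncard :=
        Set.ncard_le_ncard (occSet_subset_Iio x u hu n) (Set.finite_Iio n)
    _ = n := by rw [← Finset.coe_range, Set.ncard_coe_finset, Finset.card_range]

lemma occCount_mono {A : Type*} (x : ℕ → A) (u : List A) (hu : u ≠ []) {m n : ℕ} (h : m ≤ n) :
    occCount x u m ≤ occCount x u n := by
  apply Set.ncard_le_ncard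
  · exact fun i hi => ⟨hi.1.trans h, hi.2⟩
  · exact (Set.finite_Iio n).subset (occSet_subset_Iio x u hu n)

lemma occursAt_shift {A : Type*} (x : ℕ → A) (q u : List A) (P j : ℕ)
    (hq : OccursAt x q P) (hj : j + u.length ≤ q.length) (hpre : u <+: q.drop j) :
    OccursAt x u (P + j) := by
  intro k
  have hk := k.isLt
  have hjk : j + (k : ℕ) < q.length := by omega
  have h1 : x (P + j + (k : ℕ)) = q.get ⟨j + k, hjk⟩ := by
    rw [add_assoc]; exact hq ⟨j + k, hjk⟩
  have h2 : (q.drop j)[(k : ℕ)]'(by simp; omega) = q[j + (k : ℕ)]'hjk := List.getElem_drop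
  rw [h1]
  simp only [List.get_eq_getElem]
  rw [← h2, hpre.getElem]

/-- Key counting lemma: each of `K` disjoint occurrences of `q` contributes
`countIn u q` distinct occurrences of `u`. -/
lemma occCount_key {A : Type*} (x : ℕ → A) (q u : List A) (hu : u ≠ [])
    (p : ℕ → ℕ) (hocc : ∀ t, OccursAt x q (p t))
    (hsep : ∀ t, p t + q.length ≤ p (t + 1)) :
    ∀ K, countIn u q * K ≤ occCount x u (p K) := by
  have hul : 1 ≤ u.length := List.length_pos_iff.mpr hu
  intro K
  induction K with
  | zero => simp
  | succ K ih =>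
    set D : Set ℕ := {j : ℕ | j + u.length ≤ q.length ∧ u <+: q.drop j} with hD
    set T1 : Set ℕ := {i : ℕ | i + u.length ≤ p K ∧ OccursAt x u i} with hT1
    set S : Set ℕ := (fun j => p K + j) '' D with hS
    have hDfin : D.Finite :=
      (Set.finite_Iio q.length).subset (fun j hj => by
        have := hj.1; simp only [Set.mem_Iio]; omega)
    have hSfin : S.Finite := hDfin.image _
    have hT1fin : T1.Finite := (Set.finite_Iio (p K)).subset (occSet_subset_Iio x u hu (p K))
    have hTfin : {i : ℕ | i + u.length ≤ p (K + 1) ∧ OccursAt x u i}.Finite :=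
      (Set.finite_Iio (p (K + 1))).subset (occSet_subset_Iio x u hu (p (K + 1)))
    have hPK := hsep K
    have hsub : T1 ∪ S ⊆ {i : ℕ | i + u.length ≤ p (K + 1) ∧ OccursAt x u i} := by
      rintro i (hi | ⟨j, hj, rfl⟩)
      · exact ⟨hi.1.trans (by omega), hi.2⟩
      · have hj1 := hj.1
        exact ⟨show p K + j + u.length ≤ p (K + 1) by omega,
          occursAt_shift x q u (p K) j (hocc K) hj.1 hj.2⟩
    have hdisj : Disjoint T1 S := by
      rw [Set.disjoint_left]
      rintro i hi ⟨j, hj, rfl⟩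
      have h1 : p K + j + u.length ≤ p K := hi.1
      omega
    have hScard : S.ncard = countIn u q :=
      Set.ncard_image_of_injective D (fun a b hab => by omega)
    calc countIn u q * (K + 1) = countIn u q * K + countIn u q := by ring
      _ ≤ T1.ncard + S.ncard := Nat.add_le_add ih hScard.ge
      _ = (T1 ∪ S).ncard := (Set.ncard_union_eq hdisj hT1fin hSfin).symm
      _ ≤ occCount x u (p (K + 1)) := Set.ncard_le_ncard hsub hTfin

lemma find_step {L : ℕ} {i : ℕ → ℕ} (hmono : StrictMono i) (h0 : i 0 = 0)
    (hgap : ∀ n, i (n + 1) - i n ≤ L) (T : ℕ)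
    (H : ∃ m, T ≤ i m) : i (Nat.find H) ≤ T + L := by
  have hspec := Nat.find_spec H
  rcases Nat.eq_zero_or_pos (Nat.find H) with hf0 | h0
  · rw [hf0]
    omega
  · obtain ⟨s, hs⟩ : ∃ s, Nat.find H = s + 1 := ⟨Nat.find H - 1, by omega⟩
    have hmin : ¬ T ≤ i s := Nat.find_min H (by omega)
    have hg := hgap s
    have hlt := hmono (Nat.lt_succ_self s)
    rw [hs] at hspec ⊢
    omega

private noncomputable def sepSeq (i : ℕ → ℕ) (hi : StrictMono i) (L : ℕ) : ℕ → ℕ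
  | 0 => 0
  | t + 1 => Nat.find (p := fun m => i (sepSeq i hi L t) + L ≤ i m)
      ⟨i (sepSeq i hi L t) + L, hi.le_apply⟩

lemma exists_sep_seq {A : Type*} {x : ℕ → A} {q : List A} (h : IsQuasiperiod x q)
    (hL : 1 ≤ q.length) :
    ∃ p : ℕ → ℕ, p 0 = 0 ∧ (∀ t, OccursAt x q (p t)) ∧
      (∀ t, p t + q.length ≤ p (t + 1)) ∧ ∀ t, p (t + 1) ≤ p t + 2 * q.length := by
  obtain ⟨i, hmono, h0, hocc, hgap⟩ := h
  set L := q.length with hLdef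
  refine ⟨fun t => i (sepSeq i hmono L t), by simp [sepSeq, h0], fun t => hocc _,
    fun t => ?_, fun t => ?_⟩
  · show i (sepSeq i hmono L t) + L ≤ i (sepSeq i hmono L (t + 1))
    have heq : sepSeq i hmono L (t + 1) = Nat.find (p := fun m => i (sepSeq i hmono L t) + L ≤ i m)
        ⟨i (sepSeq i hmono L t) + L, hmono.le_apply⟩ := by simp [sepSeq]
    rw [heq]
    exact Nat.find_spec (p := fun m => i (sepSeq i hmono L t) + L ≤ i m)
      ⟨i (sepSeq i hmono L t) + L, hmono.le_apply⟩
  · show i (sepSeq i hmono L (t + 1)) ≤ i (sepSeq i hmono L t) + 2 * L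
    have heq : sepSeq i hmono L (t + 1) = Nat.find (p := fun m => i (sepSeq i hmono L t) + L ≤ i m)
        ⟨i (sepSeq i hmono L t) + L, hmono.le_apply⟩ := by simp [sepSeq]
    rw [heq]
    have := find_step hmono h0 hgap (i (sepSeq i hmono L t) + L)
      ⟨i (sepSeq i hmono L t) + L, hmono.le_apply⟩
    omega

/-- if `q` is a quasiperiod of `x` and `u` is a nonempty finite word, then
`liminf (1/n)·#(u, x_{0→n-1}) ≥ #(u,q)/(2|q|)`. -/
theorem liminf_frequency_ge_of_quasiperiod {A : Type*}
    (x : ℕ → A) (q : List A) (h : IsQuasiperiod x q)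
    (u : List A) (hu : u ≠ []) :
    (countIn u q : ℝ) / (2 * q.length) ≤
      Filter.liminf (fun n : ℕ => (occCount x u n : ℝ) / n) Filter.atTop := by
  have hul : 1 ≤ u.length := List.length_pos_iff.mpr hu
  set f : ℕ → ℝ := fun n => (occCount x u n : ℝ) / n with hf
  have hfle1 : ∀ n, f n ≤ 1 := by
    intro n
    rcases Nat.eq_zero_or_pos n with h0 | h0
    · simp [hf, h0]
    · have hn' : (0 : ℝ) < n := by exact_mod_cast h0
      rw [hf]
      rw [div_le_one hn']
      exact_mod_cast occCount_le_n x u hu n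
  have hfco : IsCoboundedUnder (· ≥ ·) atTop f :=
    (Filter.isBoundedUnder_of ⟨1, fun n => hfle1 n⟩).isCoboundedUnder_ge
  rcases Nat.eq_zero_or_pos q.length with hL | hL
  · -- `q` is empty: the left-hand side is `0/0 = 0`.
    have hC : countIn u q = 0 := by
      unfold countIn
      have : {i : ℕ | i + u.length ≤ q.length ∧ u <+: q.drop i} = ∅ := by
        ext i
        simp only [Set.mem_setOf_eq, Set.mem_empty_iff_false, iff_false, not_and]
        intro h1
        omega
      rw [this, Set.ncard_empty]
    rw [hC]
    simp only [Nat.cast_zero, zero_div]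
    refine Filter.le_liminf_of_le hfco ?_
    filter_upwards with n
    positivity
  · -- main case
    obtain ⟨p, hp0, hpocc, hpsep, hpstep⟩ := exists_sep_seq h hL
    have hpbound : ∀ t, p t ≤ 2 * q.length * t := by
      intro t
      induction t with
      | zero => simp [hp0]
      | succ t ih =>
        have := hpstep t
        calc p (t + 1) ≤ p t + 2 * q.length := this
          _ ≤ 2 * q.length * t + 2 * q.length := by omega
          _ = 2 * q.length * (t + 1) := by ring
    have hkey := occCount_key x q u hu p hpocc hpsep
    have hnat : ∀ n : ℕ, countIn u q * n ≤ (occCount x u n + countIn u q) * (2 * q.length) := by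
      intro n
      set K := n / (2 * q.length) with hK
      have h1 : p K ≤ n := by
        refine (hpbound K).trans ?_
        rw [hK, mul_comm]
        exact Nat.div_mul_le_self n (2 * q.length)
      have h3 : countIn u q * K ≤ occCount x u n :=
        (hkey K).trans (occCount_mono x u hu h1)
      have h4 : n < (K + 1) * (2 * q.length) := by
        have hdm := Nat.div_add_mod n (2 * q.length)
        have hm : n % (2 * q.length) < 2 * q.length := Nat.mod_lt n (by omega)
        calc n = 2 * q.length * K + n % (2 * q.length) := by rw [hK]; omega
          _ < 2 * q.length * K + 2 * q.length := by omega
          _ = (K + 1) * (2 * q.length) := by ring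
      calc countIn u q * n ≤ countIn u q * ((K + 1) * (2 * q.length)) :=
            Nat.mul_le_mul_left _ h4.le
        _ = (countIn u q * K + countIn u q) * (2 * q.length) := by ring
        _ ≤ (occCount x u n + countIn u q) * (2 * q.length) :=
            Nat.mul_le_mul_right _ (by omega)
    set c : ℝ := (countIn u q : ℝ) / (2 * q.length) with hc
    have hLpos : (0 : ℝ) < 2 * (q.length : ℝ) := by
      have : (1 : ℝ) ≤ (q.length : ℝ) := by exact_mod_cast hL
      linarith
    set g : ℕ → ℝ := fun n => c - (countIn u q : ℝ) / n with hg
    have hgtend : Tendsto g atTop (𝓝 c) := by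
      have h0 : Tendsto (fun n : ℕ => (countIn u q : ℝ) / n) atTop (𝓝 0) :=
        tendsto_const_nhds.div_atTop tendsto_natCast_atTop_atTop
      simpa using tendsto_const_nhds.sub h0
    have hglef : ∀ᶠ n in atTop, g n ≤ f n := by
      filter_upwards [Filter.eventually_ge_atTop 1] with n hn
      have hn' : (0 : ℝ) < n := by exact_mod_cast hn
      have hcast : (countIn u q : ℝ) * n ≤ ((occCount x u n : ℝ) + countIn u q) * (2 * q.length) := by
        exact_mod_cast hnat n
      have hkey2 : c ≤ ((occCount x u n : ℝ) + countIn u q) / n := by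
        rw [hc, div_le_div_iff₀ hLpos hn']
        exact hcast
      have : ((occCount x u n : ℝ) + countIn u q) / n
          = f n + (countIn u q : ℝ) / n := by
        rw [hf, add_div]
      rw [this] at hkey2
      rw [hg]
      linarith
    calc c = liminf g atTop := hgtend.liminf_eq.symm
      _ ≤ liminf f atTop := Filter.liminf_le_liminf hglef hgtend.isBoundedUnder_ge hfco
end
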